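/- arXiv:math/9812163 — 5 statements merged into one kernel-verified Lean document; each statement's English description precedes it below -/
import Mathlib

section
/- Let $\sigma'$ and $\sigma''$ be two adjacent 2-dimensional simplicial rational cones in a lattice $N\cong\mathbb{Z}^r$ sharing the common ray generated by a primitive vector $e_i$, with $\sigma'$ generated by primitive vectors $e_i, e'$ and $\sigma''$ generated by primitive vectors $e_i, e''$, and suppose $\sigma'\cup\sigma''$ is a convex cone $\sigma'+\sigma''$ generated by $e',e''$ with $e_i$ in its relative interior. Then $\operatorname{mult}(\sigma'+\sigma'')\, e_i = \operatorname{mult}(\sigma')\, e'' + \operatorname{mult}(\sigma'')\, e'$, where $\operatorname{mult}$ of a 2-dimensional simplicial cone denotes the index of the subgroup generated by its primitive ray generators in the lattice generated by the intersection of its linear span with $N$. -/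
/-- Coordinatewise cast `ℤ^r → ℚ^r` as an additive monoid hom. -/
def intCastPi (r : ℕ) : (Fin r → ℤ) →+ (Fin r → ℚ) :=
  AddMonoidHom.mk' (fun x i => (x i : ℚ)) (by
    intro a b; funext i; simp [Pi.add_apply])

/-- `N_τ = N ∩ span(τ)` for the cone `τ` spanned by `v, w`: the subgroup of lattice
points lying in the rational span of `v` and `w`. -/
def latticeOfSpan (r : ℕ) (v w : Fin r → ℤ) : AddSubgroup (Fin r → ℤ) :=
  (Submodule.span ℚ {intCastPi r v, intCastPi r w}).toAddSubgroup.comap (intCastPi r)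

/-- The multiplicity of the 2-dimensional simplicial cone with primitive generators
`v, w`: the index of `ℤv + ℤw` inside `N ∩ span(v, w)`. -/
noncomputable def multCone (r : ℕ) (v w : Fin r → ℤ) : ℕ :=
  (AddSubgroup.closure {v, w}).relIndex (latticeOfSpan r v w)

/-- A lattice vector is primitive if it is not a nontrivial integer multiple. -/
def IsPrimitiveVec (r : ℕ) (v : Fin r → ℤ) : Prop :=
  ∀ (k : ℤ) (w : Fin r → ℤ), v = k • w → IsUnit k

/- ### Auxiliary material -/

lemma intCastPi_apply (r : ℕ) (x : Fin r → ℤ) (i : Fin r) :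
    intCastPi r x i = (x i : ℚ) := rfl

lemma intCastPi_injective (r : ℕ) : Function.Injective (intCastPi r) := by
  intro x y h
  funext i
  exact_mod_cast (show ((x i : ℚ)) = (y i : ℚ) from congrFun h i)

lemma aux_relindex {A B : Type*} [AddGroup A] [AddGroup B] (H K : AddSubgroup A)
    (f : A →+ B) (h : H ⊓ K = f.ker ⊓ K) : H.relIndex K = Nat.card (K.map f) := by
  rw [← AddSubgroup.inf_relIndex_right H K, h, AddSubgroup.inf_relIndex_right,
    AddSubgroup.relIndex_ker]

lemma aux_map_closure_triple {A B : Type*} [AddGroup A] [AddGroup B] (f : A →+ B)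
    (x y z : A) (hx : f x = 0) (hy : f y = 0) :
    (AddSubgroup.closure {x, y, z}).map f = AddSubgroup.zmultiples (f z) := by
  apply le_antisymm
  · rw [AddSubgroup.map_le_iff_le_comap, AddSubgroup.closure_le]
    rintro w hw
    simp only [Set.mem_insert_iff, Set.mem_singleton_iff] at hw
    rcases hw with rfl | rfl | rfl
    · exact AddSubgroup.mem_comap.2 (by rw [hx]; exact zero_mem _)
    · exact AddSubgroup.mem_comap.2 (by rw [hy]; exact zero_mem _)
    · exact AddSubgroup.mem_comap.2 (AddSubgroup.mem_zmultiples _)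
  · rw [AddSubgroup.zmultiples_eq_closure, AddSubgroup.closure_le,
      Set.singleton_subset_iff]
    exact ⟨z, AddSubgroup.subset_closure (by simp), rfl⟩

lemma aux_mem_closure_triple {A : Type*} [AddCommGroup A] {p q s x : A} :
    x ∈ AddSubgroup.closure ({p, q, s} : Set A) ↔
      ∃ k u v : ℤ, k • p + u • q + v • s = x := by
  have h : ({p, q, s} : Set A) = {p} ∪ {q, s} := by
    rw [Set.insert_eq]
  rw [h, AddSubgroup.closure_union, AddSubgroup.mem_sup]
  constructor
  · rintro ⟨y, hy, z, hz, rfl⟩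
    rw [AddSubgroup.mem_closure_singleton] at hy
    rw [AddSubgroup.mem_closure_pair] at hz
    obtain ⟨k, rfl⟩ := hy
    obtain ⟨u, v, rfl⟩ := hz
    exact ⟨k, u, v, add_assoc _ _ _⟩
  · rintro ⟨k, u, v, rfl⟩
    exact ⟨k • p, AddSubgroup.mem_closure_singleton.2 ⟨k, rfl⟩, u • q + v • s,
      AddSubgroup.mem_closure_pair.2 ⟨u, v, rfl⟩, (add_assoc _ _ _).symm⟩

/-- The quotient map `ℚ → ℚ/ℤ`. -/
noncomputable def ratmod : ℚ →+ ℚ ⧸ AddSubgroup.zmultiples (1 : ℚ) :=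
  QuotientAddGroup.mk' _

lemma ratmod_eq_zero_iff (x : ℚ) : ratmod x = 0 ↔ ∃ n : ℤ, (n : ℚ) = x := by
  rw [ratmod, QuotientAddGroup.mk'_apply, QuotientAddGroup.eq_zero_iff]
  simp only [AddSubgroup.mem_zmultiples_iff, zsmul_eq_mul, mul_one]

lemma ratmod_intCast (n : ℤ) : ratmod (n : ℚ) = 0 :=
  (ratmod_eq_zero_iff _).2 ⟨n, rfl⟩

/-- The combined hom `ℤ^r → (ℚ/ℤ)²` attached to two linear functionals. -/
noncomputable def coneHom (r : ℕ) (α β : (Fin r → ℚ) →ₗ[ℚ] ℚ) :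
    (Fin r → ℤ) →+ (ℚ ⧸ AddSubgroup.zmultiples (1 : ℚ)) ×
      (ℚ ⧸ AddSubgroup.zmultiples (1 : ℚ)) :=
  ((ratmod.comp α.toAddMonoidHom).prod (ratmod.comp β.toAddMonoidHom)).comp (intCastPi r)

lemma coneHom_apply (r : ℕ) (α β : (Fin r → ℚ) →ₗ[ℚ] ℚ) (x : Fin r → ℤ) :
    coneHom r α β x = (ratmod (α (intCastPi r x)), ratmod (β (intCastPi r x))) := rfl

/-- The relative index of `⟨v,w⟩` inside `⟨v,w,t⟩` is the order of the pair of
coordinates of `t` in `(ℚ/ℤ)²`. -/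
lemma cone_relindex (r : ℕ) (v w t : Fin r → ℤ) (α β : (Fin r → ℚ) →ₗ[ℚ] ℚ)
    (hαv : α (intCastPi r v) = 1) (hαw : α (intCastPi r w) = 0)
    (hβv : β (intCastPi r v) = 0) (hβw : β (intCastPi r w) = 1)
    (ht : intCastPi r t =
      α (intCastPi r t) • intCastPi r v + β (intCastPi r t) • intCastPi r w) :
    (AddSubgroup.closure {v, w}).relIndex (AddSubgroup.closure {v, w, t}) =
      addOrderOf (ratmod (α (intCastPi r t)), ratmod (β (intCastPi r t))) := by
  have hFv : coneHom r α β v = 0 := by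
    rw [coneHom_apply, hαv, hβv]
    refine Prod.ext ?_ ?_
    · simpa using ratmod_intCast 1
    · simpa using ratmod_intCast 0
  have hFw : coneHom r α β w = 0 := by
    rw [coneHom_apply, hαw, hβw]
    refine Prod.ext ?_ ?_
    · simpa using ratmod_intCast 0
    · simpa using ratmod_intCast 1
  have hker : AddSubgroup.closure {v, w} ⊓ AddSubgroup.closure {v, w, t}
      = (coneHom r α β).ker ⊓ AddSubgroup.closure {v, w, t} := by
    ext x
    simp only [AddSubgroup.mem_inf]
    constructor
    · rintro ⟨h1, h2⟩
      refine ⟨?_, h2⟩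
      rw [AddSubgroup.mem_closure_pair] at h1
      obtain ⟨m, n, rfl⟩ := h1
      rw [AddMonoidHom.mem_ker, map_add, map_zsmul, map_zsmul, hFv, hFw]
      simp
    · rintro ⟨h1, h2⟩
      refine ⟨?_, h2⟩
      rw [aux_mem_closure_triple] at h2
      obtain ⟨k, u, m, rfl⟩ := h2
      rw [AddMonoidHom.mem_ker, map_add, map_add, map_zsmul, map_zsmul, map_zsmul,
        hFv, hFw] at h1
      simp only [smul_zero, zero_add, add_zero] at h1
      rw [coneHom_apply, Prod.ext_iff, Prod.smul_fst, Prod.smul_snd, Prod.fst_zero,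
        Prod.snd_zero] at h1
      obtain ⟨hA, hB⟩ := h1
      rw [← map_zsmul ratmod, zsmul_eq_mul, ratmod_eq_zero_iff] at hA hB
      obtain ⟨c1, hc1⟩ := hA
      obtain ⟨c2, hc2⟩ := hB
      have hmt : m • t = c1 • v + c2 • w := by
        apply intCastPi_injective r
        have h1 : intCastPi r (m • t) = (m : ℚ) • intCastPi r t := by
          rw [map_zsmul, Int.cast_smul_eq_zsmul]
        have h2 : intCastPi r (c1 • v + c2 • w)
            = (c1 : ℚ) • intCastPi r v + (c2 : ℚ) • intCastPi r w := by
          rw [map_add, map_zsmul, map_zsmul, Int.cast_smul_eq_zsmul, Int.cast_smul_eq_zsmul]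
        rw [h1, h2, ht, smul_add, smul_smul, smul_smul, hc1, hc2]
      refine AddSubgroup.mem_closure_pair.2 ⟨k + c1, u + c2, ?_⟩
      rw [add_zsmul, add_zsmul, hmt]
      abel
  rw [aux_relindex _ _ _ hker,
    aux_map_closure_triple (coneHom r α β) v w t hFv hFw, Nat.card_zmultiples,
    coneHom_apply]

lemma ratmod_zsmul_eq_zero_iff (x : ℚ) (m : ℤ) :
    m • ratmod x = 0 ↔ ∃ n : ℤ, (n : ℚ) = m * x := by
  rw [← map_zsmul, zsmul_eq_mul, ratmod_eq_zero_iff]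

lemma ratmod_nsmul_eq_zero_iff (x : ℚ) (m : ℕ) :
    m • ratmod x = 0 ↔ ∃ n : ℤ, (n : ℚ) = m * x := by
  rw [← map_nsmul, nsmul_eq_mul, ratmod_eq_zero_iff]

lemma pair_zsmul_eq_zero_iff (x y : ℚ) (m : ℤ) :
    m • ((ratmod x, ratmod y) :
        (ℚ ⧸ AddSubgroup.zmultiples (1 : ℚ)) × (ℚ ⧸ AddSubgroup.zmultiples (1 : ℚ))) = 0 ↔
      (∃ n : ℤ, (n : ℚ) = m * x) ∧ (∃ n : ℤ, (n : ℚ) = m * y) := by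
  rw [Prod.smul_mk, Prod.mk_eq_zero, ratmod_zsmul_eq_zero_iff, ratmod_zsmul_eq_zero_iff]

lemma pair_nsmul_eq_zero_iff (x y : ℚ) (m : ℕ) :
    m • ((ratmod x, ratmod y) :
        (ℚ ⧸ AddSubgroup.zmultiples (1 : ℚ)) × (ℚ ⧸ AddSubgroup.zmultiples (1 : ℚ))) = 0 ↔
      (∃ n : ℤ, (n : ℚ) = m * x) ∧ (∃ n : ℤ, (n : ℚ) = m * y) := by
  rw [Prod.smul_mk, Prod.mk_eq_zero, ratmod_nsmul_eq_zero_iff, ratmod_nsmul_eq_zero_iff]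

lemma order_aux (a b : ℚ) (hb : b ≠ 0) (d : ℕ) (p q : ℤ)
    (hp : (p : ℚ) = d * a) (hq : (q : ℚ) = d * b) (hq_pos : 0 < q)
    (hmin : ∀ m : ℤ, (∃ n : ℤ, (n : ℚ) = m * a) → (∃ n : ℤ, (n : ℚ) = m * b) →
      (d : ℤ) ∣ m) :
    addOrderOf ((ratmod b⁻¹, ratmod (-(a * b⁻¹))) :
        (ℚ ⧸ AddSubgroup.zmultiples (1 : ℚ)) × (ℚ ⧸ AddSubgroup.zmultiples (1 : ℚ)))
      = q.toNat := by
  set D := addOrderOf ((ratmod b⁻¹, ratmod (-(a * b⁻¹))) :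
      (ℚ ⧸ AddSubgroup.zmultiples (1 : ℚ)) × (ℚ ⧸ AddSubgroup.zmultiples (1 : ℚ))) with hD
  have hqq : ((q.toNat : ℤ) : ℚ) = (q : ℚ) := by
    rw [Int.toNat_of_nonneg hq_pos.le]
  have hqt : ((q.toNat : ℕ) : ℚ) = (d : ℚ) * b := by
    rw [← hq]
    exact_mod_cast hqq
  have dvd1 : D ∣ q.toNat := by
    rw [hD, addOrderOf_dvd_iff_nsmul_eq_zero, pair_nsmul_eq_zero_iff]
    constructor
    · refine ⟨(d : ℤ), ?_⟩
      rw [hqt]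
      push_cast
      field_simp
    · refine ⟨-p, ?_⟩
      rw [hqt]
      push_cast
      rw [hp]
      field_simp
  have dvd2 : (q : ℤ) ∣ (D : ℤ) := by
    have h0 := addOrderOf_nsmul_eq_zero ((ratmod b⁻¹, ratmod (-(a * b⁻¹))) :
      (ℚ ⧸ AddSubgroup.zmultiples (1 : ℚ)) × (ℚ ⧸ AddSubgroup.zmultiples (1 : ℚ)))
    rw [← hD, pair_nsmul_eq_zero_iff] at h0
    obtain ⟨⟨m, hm⟩, ⟨m2, hm2⟩⟩ := h0
    have hmb : (m : ℚ) * b = (D : ℚ) := by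
      rw [hm]
      field_simp
    have hma : (m : ℚ) * a = ((-m2 : ℤ) : ℚ) := by
      push_cast
      rw [hm, hm2]
      field_simp
    obtain ⟨c, hc⟩ := hmin m ⟨-m2, hma.symm⟩ ⟨(D : ℤ), by rw [hmb]; push_cast; ring⟩
    refine ⟨c, ?_⟩
    have : ((D : ℤ) : ℚ) = ((q * c : ℤ) : ℚ) := by
      push_cast
      rw [← hmb, hc]
      push_cast
      rw [hq]
      ring
    exact_mod_cast this
  have : (D : ℤ) = q := by
    refine Int.dvd_antisymm (Int.ofNat_nonneg D) hq_pos.le ?_ dvd2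
    calc (D : ℤ) ∣ (q.toNat : ℤ) := Int.natCast_dvd_natCast.mpr dvd1
    _ = q := Int.toNat_of_nonneg hq_pos.le
  omega

/-- For adjacent 2-dimensional simplicial rational cones `σ' = cone(e_i, e')` and
`σ'' = cone(e_i, e'')` whose union is the convex cone `σ' + σ'' = cone(e', e'')`
with `e_i` in its relative interior,
`mult(σ' + σ'') · e_i = mult(σ') · e'' + mult(σ'') · e'`. -/
theorem mult_adjacent_cones (r : ℕ) (eI e' e'' : Fin r → ℤ)
    (hI : IsPrimitiveVec r eI) (h' : IsPrimitiveVec r e') (h'' : IsPrimitiveVec r e'')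
    (hind : LinearIndependent ℚ ![intCastPi r e', intCastPi r e''])
    (hint : ∃ a b : ℚ, 0 < a ∧ 0 < b ∧
      ∀ i, (eI i : ℚ) = a * (e' i : ℚ) + b * (e'' i : ℚ)) :
    ∀ i, (multCone r e' e'' : ℤ) * eI i =
      (multCone r eI e' : ℤ) * e'' i + (multCone r eI e'' : ℤ) * e' i := by
  obtain ⟨a, b, ha, hb, hab⟩ := hint
  have ha0 : a ≠ 0 := ne_of_gt ha
  have hb0 : b ≠ 0 := ne_of_gt hb
  set u' : Fin r → ℚ := intCastPi r e' with hu'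
  set u'' : Fin r → ℚ := intCastPi r e'' with hu''
  set uI : Fin r → ℚ := intCastPi r eI with huI
  have habv : uI = a • u' + b • u'' := by
    funext i
    simpa [huI, hu', hu'', intCastPi_apply, smul_eq_mul] using hab i
  -- dual functionals
  set T : (Fin 2 → ℚ) →ₗ[ℚ] (Fin r → ℚ) := Fintype.linearCombination ℚ ![u', u''] with hT
  have hTapp : ∀ c : Fin 2 → ℚ, T c = c 0 • u' + c 1 • u'' := by
    intro c
    rw [hT, Fintype.linearCombination_apply, Fin.sum_univ_two]
    simp
  have hTinj : LinearMap.ker T = ⊥ := by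
    rw [LinearMap.ker_eq_bot']
    intro c hc
    rw [hTapp] at hc
    have h0 := Fintype.linearIndependent_iff.mp hind c (by
      rw [Fin.sum_univ_two]
      simpa using hc)
    funext i
    exact h0 i
  obtain ⟨S, hS⟩ := T.exists_leftInverse_of_injective hTinj
  have hSapp : ∀ c : Fin 2 → ℚ, S (T c) = c := fun c => by
    have := LinearMap.congr_fun hS c
    simpa using this
  set f : (Fin r → ℚ) →ₗ[ℚ] ℚ := (LinearMap.proj 0).comp S with hf
  set g : (Fin r → ℚ) →ₗ[ℚ] ℚ := (LinearMap.proj 1).comp S with hg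
  have hu'T : u' = T ![1, 0] := by rw [hTapp]; simp
  have hu''T : u'' = T ![0, 1] := by rw [hTapp]; simp
  have hfu' : f u' = 1 := by
    rw [hf, hu'T, LinearMap.comp_apply, hSapp]
    simp
  have hfu'' : f u'' = 0 := by
    rw [hf, hu''T, LinearMap.comp_apply, hSapp]
    simp
  have hgu' : g u' = 0 := by
    rw [hg, hu'T, LinearMap.comp_apply, hSapp]
    simp
  have hgu'' : g u'' = 1 := by
    rw [hg, hu''T, LinearMap.comp_apply, hSapp]
    simp
  have hfuI : f uI = a := by
    rw [habv, map_add, map_smul, map_smul, hfu', hfu'', smul_eq_mul, smul_eq_mul]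
    ring
  have hguI : g uI = b := by
    rw [habv, map_add, map_smul, map_smul, hgu', hgu'', smul_eq_mul, smul_eq_mul]
    ring
  -- functionals adapted to the other two cones
  set α2 : (Fin r → ℚ) →ₗ[ℚ] ℚ := b⁻¹ • g with hα2
  set β2 : (Fin r → ℚ) →ₗ[ℚ] ℚ := f - (a * b⁻¹) • g with hβ2
  set α3 : (Fin r → ℚ) →ₗ[ℚ] ℚ := a⁻¹ • f with hα3
  set β3 : (Fin r → ℚ) →ₗ[ℚ] ℚ := g - (b * a⁻¹) • f with hβ3
  have hα2uI : α2 uI = 1 := by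
    rw [hα2, LinearMap.smul_apply, hguI, smul_eq_mul, inv_mul_cancel₀ hb0]
  have hα2u' : α2 u' = 0 := by
    rw [hα2, LinearMap.smul_apply, hgu', smul_eq_mul, mul_zero]
  have hα2u'' : α2 u'' = b⁻¹ := by
    rw [hα2, LinearMap.smul_apply, hgu'', smul_eq_mul, mul_one]
  have hβ2uI : β2 uI = 0 := by
    rw [hβ2, LinearMap.sub_apply, LinearMap.smul_apply, hfuI, hguI, smul_eq_mul]
    field_simp
    ring
  have hβ2u' : β2 u' = 1 := by
    rw [hβ2, LinearMap.sub_apply, LinearMap.smul_apply, hfu', hgu', smul_eq_mul]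
    ring
  have hβ2u'' : β2 u'' = -(a * b⁻¹) := by
    rw [hβ2, LinearMap.sub_apply, LinearMap.smul_apply, hfu'', hgu'', smul_eq_mul]
    ring
  have hα3uI : α3 uI = 1 := by
    rw [hα3, LinearMap.smul_apply, hfuI, smul_eq_mul, inv_mul_cancel₀ ha0]
  have hα3u'' : α3 u'' = 0 := by
    rw [hα3, LinearMap.smul_apply, hfu'', smul_eq_mul, mul_zero]
  have hα3u' : α3 u' = a⁻¹ := by
    rw [hα3, LinearMap.smul_apply, hfu', smul_eq_mul, mul_one]
  have hβ3uI : β3 uI = 0 := by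
    rw [hβ3, LinearMap.sub_apply, LinearMap.smul_apply, hfuI, hguI, smul_eq_mul]
    field_simp
    ring
  have hβ3u'' : β3 u'' = 1 := by
    rw [hβ3, LinearMap.sub_apply, LinearMap.smul_apply, hfu'', hgu'', smul_eq_mul]
    ring
  have hβ3u' : β3 u' = -(b * a⁻¹) := by
    rw [hβ3, LinearMap.sub_apply, LinearMap.smul_apply, hfu', hgu', smul_eq_mul]
    ring
  -- decomposition identities
  have ht1 : uI = f uI • u' + g uI • u'' := by
    rw [hfuI, hguI]
    exact habv
  have ht2 : u'' = α2 u'' • uI + β2 u'' • u' := by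
    rw [hα2u'', hβ2u'', habv, smul_add, smul_smul, smul_smul, inv_mul_cancel₀ hb0, one_smul]
    match_scalars <;> field_simp <;> ring
  have ht3 : u' = α3 u' • uI + β3 u' • u'' := by
    rw [hα3u', hβ3u', habv, smul_add, smul_smul, smul_smul, inv_mul_cancel₀ ha0, one_smul]
    match_scalars <;> field_simp <;> ring
  -- the three relative indices
  have hc1 := cone_relindex r e' e'' eI f g hfu' hfu'' hgu' hgu'' ht1
  have hc2 := cone_relindex r eI e' e'' α2 β2 hα2uI hα2u' hβ2uI hβ2u' ht2
  have hc3 := cone_relindex r eI e'' e' α3 β3 hα3uI hα3u'' hβ3uI hβ3u'' ht3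
  rw [hfuI, hguI] at hc1
  rw [hα2u'', hβ2u''] at hc2
  rw [hα3u', hβ3u'] at hc3
  -- the order of (a, b) in (ℚ/ℤ)²
  set d : ℕ := addOrderOf ((ratmod a, ratmod b) :
    (ℚ ⧸ AddSubgroup.zmultiples (1 : ℚ)) × (ℚ ⧸ AddSubgroup.zmultiples (1 : ℚ))) with hd
  have hdpos : 0 < d := by
    rw [hd]
    refine IsOfFinAddOrder.addOrderOf_pos ?_
    rw [isOfFinAddOrder_iff_nsmul_eq_zero]
    refine ⟨a.den * b.den, by positivity, ?_⟩
    rw [pair_nsmul_eq_zero_iff]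
    have hnuma : (a.den : ℚ) * a = a.num := by
      rw [mul_comm]
      exact_mod_cast Rat.mul_den_eq_num a
    have hnumb : (b.den : ℚ) * b = b.num := by
      rw [mul_comm]
      exact_mod_cast Rat.mul_den_eq_num b
    constructor
    · refine ⟨(b.den : ℤ) * a.num, ?_⟩
      push_cast
      linear_combination (-(b.den : ℚ)) * hnuma
    · refine ⟨(a.den : ℤ) * b.num, ?_⟩
      push_cast
      linear_combination (-(a.den : ℚ)) * hnumb
  have hsmul := addOrderOf_nsmul_eq_zero ((ratmod a, ratmod b) :
    (ℚ ⧸ AddSubgroup.zmultiples (1 : ℚ)) × (ℚ ⧸ AddSubgroup.zmultiples (1 : ℚ)))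
  rw [← hd, pair_nsmul_eq_zero_iff] at hsmul
  obtain ⟨⟨p, hp⟩, ⟨q, hq⟩⟩ := hsmul
  have hmin : ∀ m : ℤ, (∃ n : ℤ, (n : ℚ) = m * a) → (∃ n : ℤ, (n : ℚ) = m * b) →
      (d : ℤ) ∣ m := by
    intro m h1 h2
    rw [hd, addOrderOf_dvd_iff_zsmul_eq_zero, pair_zsmul_eq_zero_iff]
    exact ⟨h1, h2⟩
  have hp_pos : 0 < p := by
    have : (0 : ℚ) < (p : ℚ) := by
      rw [hp]
      positivity
    exact_mod_cast this
  have hq_pos : 0 < q := by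
    have : (0 : ℚ) < (q : ℚ) := by
      rw [hq]
      positivity
    exact_mod_cast this
  -- identify the two other orders
  have hc2' : (AddSubgroup.closure {eI, e'}).relIndex (AddSubgroup.closure {eI, e', e''})
      = q.toNat := by
    rw [hc2]
    exact order_aux a b hb0 d p q hp hq hq_pos hmin
  have hc3' : (AddSubgroup.closure {eI, e''}).relIndex (AddSubgroup.closure {eI, e'', e'})
      = p.toNat := by
    rw [hc3]
    exact order_aux b a ha0 d q p hq hp hp_pos (fun m h1 h2 => hmin m h2 h1)
  -- span equalities
  have huI_mem : uI ∈ Submodule.span ℚ {u', u''} := by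
    rw [habv]
    exact add_mem (Submodule.smul_mem _ _ (Submodule.subset_span (by simp)))
      (Submodule.smul_mem _ _ (Submodule.subset_span (by simp)))
  have ht2' : u'' = b⁻¹ • uI + (-(a * b⁻¹)) • u' := by
    rw [← hβ2u'', ← hα2u'']
    exact ht2
  have ht3' : u' = a⁻¹ • uI + (-(b * a⁻¹)) • u'' := by
    rw [← hβ3u', ← hα3u']
    exact ht3
  have hspan2 : Submodule.span ℚ {intCastPi r eI, intCastPi r e'}
      = Submodule.span ℚ {intCastPi r e', intCastPi r e''} := by
    apply le_antisymm
    · rw [Submodule.span_le]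
      rintro x hx
      simp only [Set.mem_insert_iff, Set.mem_singleton_iff] at hx
      rcases hx with rfl | rfl
      · exact huI_mem
      · exact Submodule.subset_span (by simp)
    · rw [Submodule.span_le]
      rintro x hx
      simp only [Set.mem_insert_iff, Set.mem_singleton_iff] at hx
      rcases hx with rfl | rfl
      · exact Submodule.subset_span (by simp)
      · show u'' ∈ _
        rw [ht2']
        exact add_mem (Submodule.smul_mem _ _ (Submodule.subset_span (by simp [huI])))
          (Submodule.smul_mem _ _ (Submodule.subset_span (by simp [hu'])))
  have hspan3 : Submodule.span ℚ {intCastPi r eI, intCastPi r e''}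
      = Submodule.span ℚ {intCastPi r e', intCastPi r e''} := by
    apply le_antisymm
    · rw [Submodule.span_le]
      rintro x hx
      simp only [Set.mem_insert_iff, Set.mem_singleton_iff] at hx
      rcases hx with rfl | rfl
      · exact huI_mem
      · exact Submodule.subset_span (by simp)
    · rw [Submodule.span_le]
      rintro x hx
      simp only [Set.mem_insert_iff, Set.mem_singleton_iff] at hx
      rcases hx with rfl | rfl
      · show u' ∈ _
        rw [ht3']
        exact add_mem (Submodule.smul_mem _ _ (Submodule.subset_span (by simp [huI])))
          (Submodule.smul_mem _ _ (Submodule.subset_span (by simp [hu''])))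
      · exact Submodule.subset_span (by simp)
  have hlat2 : latticeOfSpan r eI e' = latticeOfSpan r e' e'' := by
    unfold latticeOfSpan
    rw [hspan2]
  have hlat3 : latticeOfSpan r eI e'' = latticeOfSpan r e' e'' := by
    unfold latticeOfSpan
    rw [hspan3]
  -- H0 and its place between the generators and the lattice
  have hH0L : AddSubgroup.closure {e', e'', eI} ≤ latticeOfSpan r e' e'' := by
    rw [AddSubgroup.closure_le]
    rintro x hx
    simp only [Set.mem_insert_iff, Set.mem_singleton_iff] at hx
    have hmem : ∀ y : Fin r → ℤ,
        intCastPi r y ∈ Submodule.span ℚ {intCastPi r e', intCastPi r e''} →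
        y ∈ (latticeOfSpan r e' e'' : Set (Fin r → ℤ)) := by
      intro y hy
      show y ∈ latticeOfSpan r e' e''
      rw [latticeOfSpan, AddSubgroup.mem_comap, Submodule.mem_toAddSubgroup]
      exact hy
    rcases hx with rfl | rfl | rfl
    · exact hmem _ (Submodule.subset_span (by simp))
    · exact hmem _ (Submodule.subset_span (by simp))
    · exact hmem _ huI_mem
  have h1le : AddSubgroup.closure {e', e''} ≤ AddSubgroup.closure {e', e'', eI} :=
    AddSubgroup.closure_mono (by
      intro x hx
      simp only [Set.mem_insert_iff, Set.mem_singleton_iff] at hx ⊢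
      tauto)
  have h2le : AddSubgroup.closure {eI, e'} ≤ AddSubgroup.closure {e', e'', eI} :=
    AddSubgroup.closure_mono (by
      intro x hx
      simp only [Set.mem_insert_iff, Set.mem_singleton_iff] at hx ⊢
      tauto)
  have h3le : AddSubgroup.closure {eI, e''} ≤ AddSubgroup.closure {e', e'', eI} :=
    AddSubgroup.closure_mono (by
      intro x hx
      simp only [Set.mem_insert_iff, Set.mem_singleton_iff] at hx ⊢
      tauto)
  have hset2 : ({eI, e', e''} : Set (Fin r → ℤ)) = {e', e'', eI} := by
    ext x
    simp only [Set.mem_insert_iff, Set.mem_singleton_iff]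
    tauto
  have hset3 : ({eI, e'', e'} : Set (Fin r → ℤ)) = {e', e'', eI} := by
    ext x
    simp only [Set.mem_insert_iff, Set.mem_singleton_iff]
    tauto
  have hset1 : ({e', e'', eI} : Set (Fin r → ℤ)) = {e', e'', eI} := rfl
  rw [hset2] at hc2'
  rw [hset3] at hc3'
  set n0 : ℕ := (AddSubgroup.closure {e', e'', eI}).relIndex (latticeOfSpan r e' e'')
    with hn0
  have hm1 : multCone r e' e'' = d * n0 := by
    rw [multCone, ← AddSubgroup.relIndex_mul_relIndex (AddSubgroup.closure {e', e''})
      (AddSubgroup.closure {e', e'', eI}) _ h1le hH0L, hc1, hn0, hd]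
  have hm2 : multCone r eI e' = q.toNat * n0 := by
    rw [multCone, hlat2, ← AddSubgroup.relIndex_mul_relIndex (AddSubgroup.closure {eI, e'})
      (AddSubgroup.closure {e', e'', eI}) _ h2le hH0L, hc2', hn0]
  have hm3 : multCone r eI e'' = p.toNat * n0 := by
    rw [multCone, hlat3, ← AddSubgroup.relIndex_mul_relIndex (AddSubgroup.closure {eI, e''})
      (AddSubgroup.closure {e', e'', eI}) _ h3le hH0L, hc3', hn0]
  intro i
  rw [hm1, hm2, hm3]
  have hrel : (d : ℤ) * eI i = p * e' i + q * e'' i := by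
    have hQ : ((d : ℤ) : ℚ) * ((eI i : ℤ) : ℚ)
        = (p : ℚ) * ((e' i : ℤ) : ℚ) + (q : ℚ) * ((e'' i : ℤ) : ℚ) := by
      push_cast
      rw [hab i, hp, hq]
      ring
    exact_mod_cast hQ
  push_cast [Int.toNat_of_nonneg hq_pos.le, Int.toNat_of_nonneg hp_pos.le]
  linear_combination (n0 : ℤ) * hrel
end

section
/- Let $\Sigma$ be a complete fan in $\mathbb{R}^d$ and let $\psi:\mathbb{R}^d\to\mathbb{R}$ be a function that is linear on each cone of $\Sigma$ (a support function). Suppose the polytope $\Delta_\psi = \{m\in\mathbb{R}^d : \langle m,n\rangle \ge \psi(n)\text{ for all }n\}$ has nonempty interior (dimension $d$). Define an equivalence on maximal cones of $\Sigma$ by gluing together those maximal cones on which $\psi$ is given by the same linear functional $m_\sigma\in\mathbb{R}^d$. If $\psi$ is concave (upper convex), then each union of glued maximal cones is a strongly convex polyhedral cone. -/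
/-- Let `Σ` be a complete fan in `ℝ^d` (here: a finite family of closed convex
cones `σ i` covering `ℝ^d`) and let `ψ` be a support function, linear on each
cone: `ψ = ⟨m i, ·⟩` on `σ i`.  Assume `ψ` is concave and the polytope
`Δ_ψ = {u : ⟨u, n⟩ ≥ ψ(n) for all n}` has nonempty interior.  Glue together the
maximal cones carrying the same linear functional: then each glued cone is
strongly convex, i.e. contains no nonzero `x` together with `-x`. -/
theorem glued_cones_strongly_convex (d : ℕ) (ι : Type*) [Fintype ι]
    (σ : ι → Set (Fin d → ℝ))
    (hclosed : ∀ i, IsClosed (σ i)) (hconv : ∀ i, Convex ℝ (σ i))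
    (hcone : ∀ i, ∀ x ∈ σ i, ∀ r : ℝ, 0 ≤ r → r • x ∈ σ i)
    (hcover : (⋃ i, σ i) = Set.univ)
    (ψ : (Fin d → ℝ) → ℝ) (m : ι → Fin d → ℝ)
    (hlin : ∀ i, ∀ n ∈ σ i, ψ n = ∑ j, m i j * n j)
    (hconc : ConcaveOn ℝ Set.univ ψ)
    (hfull : (interior {u : Fin d → ℝ | ∀ n : Fin d → ℝ, ψ n ≤ ∑ j, u j * n j}).Nonempty)
    (i₀ : ι) :
    ∀ x ∈ ⋃ i ∈ {i | m i = m i₀}, σ i,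
      -x ∈ (⋃ i ∈ {i | m i = m i₀}, σ i) → x = 0 := by
  intro x hx hnx
  simp only [Set.mem_iUnion, Set.mem_setOf_eq, exists_prop] at hx hnx
  obtain ⟨i, hi, hxi⟩ := hx
  obtain ⟨i', hi', hxi'⟩ := hnx
  obtain ⟨u, hu⟩ := hfull
  have key : ∀ v ∈ {u : Fin d → ℝ | ∀ n : Fin d → ℝ, ψ n ≤ ∑ j, u j * n j},
      ∑ j, v j * x j = ∑ j, m i₀ j * x j := by
    intro v hv
    have h1 := hv x
    have h2 := hv (-x)
    rw [hlin i x hxi, hi] at h1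
    rw [hlin i' (-x) hxi', hi'] at h2
    simp only [Pi.neg_apply, mul_neg, Finset.sum_neg_distrib] at h2
    linarith
  obtain ⟨ε, hε, hball⟩ := Metric.isOpen_iff.mp isOpen_interior u hu
  have ht : (0:ℝ) < ε / (2 * (‖x‖ + 1)) := by positivity
  set t : ℝ := ε / (2 * (‖x‖ + 1)) with htdef
  have hmem : u + t • x ∈ Metric.ball u ε := by
    rw [Metric.mem_ball, dist_eq_norm]
    have : u + t • x - u = t • x := by ring_nf
    rw [this, norm_smul, Real.norm_eq_abs, abs_of_pos ht]
    have hxle : ‖x‖ < ‖x‖ + 1 := by linarith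
    calc t * ‖x‖ ≤ t * (‖x‖ + 1) := by nlinarith [norm_nonneg x]
      _ = ε / 2 := by
        have hpos : (‖x‖ + 1) ≠ 0 := by positivity
        rw [htdef, div_mul_eq_mul_div, mul_comm (2:ℝ), ← div_div, mul_div_assoc, div_self hpos, mul_one]
      _ < ε := by linarith
  have h1 := key (u + t • x) (interior_subset (hball hmem))
  have h2 := key u (interior_subset hu)
  have hsum : t * ∑ j, x j * x j = 0 := by
    have : ∑ j, (u j + t * x j) * x j = ∑ j, u j * x j + t * ∑ j, x j * x j := by
      rw [Finset.mul_sum, ← Finset.sum_add_distrib]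
      apply Finset.sum_congr rfl
      intro j _; ring
    simp only [Pi.add_apply, Pi.smul_apply, smul_eq_mul] at h1
    rw [this] at h1
    linarith
  have hzero : ∑ j, x j * x j = 0 := by
    rcases mul_eq_zero.mp hsum with h | h
    · exact absurd h (ne_of_gt ht)
    · exact h
  funext j
  have := (Finset.sum_eq_zero_iff_of_nonneg (fun j _ => mul_self_nonneg (x j))).mp hzero j (Finset.mem_univ j)
  exact mul_self_eq_zero.mp this
end

section
/- Let $V$ be a $d$-dimensional real vector space, $u_{i_0},\dots,u_{i_{a-1}}, u_{i_a}, u_{i_{a+1}},\dots,u_{i_{d-1}}$ distinct coordinate directions, and let $\Omega = E\lrcorner\, dx_1\wedge\cdots\wedge dx_n$ for a fixed $(n-d)$-polyvector field $E$. Write $K_j$ for contraction with $\partial/\partial x_j$. Then, with $du = dx_{i_0}\wedge\cdots\wedge dx_{i_{a-1}}$, $dv=dx_{i_{a+1}}\wedge\cdots\wedge dx_{i_{d-1}}$, and $dw=\bigwedge_{i\notin\{i_0,\dots,i_{d-1}\}} dx_i$, one has the identity $K_{i_a}\cdots K_{i_0}\Omega \wedge K_{i_{d-1}}\cdots K_{i_a}\Omega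 = \pm (E\lrcorner\, dw)\cdot (K_{i_a}\Omega)$ (equality of $(d-1)$-forms up to a sign depending only on the index pattern). -/
open MvPolynomial

noncomputable section

variable (n : ℕ)

/-- Algebraic differential forms in the variables `x_1, …, x_n`:
the exterior algebra over the free module on the `dx_i`. -/
abbrev AlgForms := ExteriorAlgebra (MvPolynomial (Fin n) ℂ) (Fin n → MvPolynomial (Fin n) ℂ)

/-- The basic 1-form `dx_i`. -/
def dxF (i : Fin n) : AlgForms n :=
  ExteriorAlgebra.ι _ (Pi.single i 1)

/-- Contraction (interior product) of a vector field (recorded by its coefficient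
functions) with a differential form. -/
def contractVF (v : Fin n → MvPolynomial (Fin n) ℂ) (ω : AlgForms n) : AlgForms n :=
  CliffordAlgebra.contractLeft (Q := (0 : QuadraticForm (MvPolynomial (Fin n) ℂ)
      (Fin n → MvPolynomial (Fin n) ℂ)))
    (∑ j, v j • LinearMap.proj j) ω

/-- The contraction operator `K_j = ∂/∂x_j ⌟`. -/
def Kc (j : Fin n) (ω : AlgForms n) : AlgForms n :=
  contractVF n (Pi.single j 1) ω

/-- Iterated contraction `K_{j_m} ⋯ K_{j_1} ω` along a list `[j_1, …, j_m]`
(the first entry of the list is contracted first). -/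
def KcSeq (l : List (Fin n)) (ω : AlgForms n) : AlgForms n :=
  l.foldl (fun acc j => Kc n j acc) ω

/-- The top form `dx_1 ∧ ⋯ ∧ dx_n`. -/
def topForm : AlgForms n := (List.ofFn fun i : Fin n => dxF n i).prod

/-- Iterated contraction by a tuple of vector fields, encoding contraction by the
decomposable polyvector field `E = θ_1 ∧ ⋯ ∧ θ_k`. -/
def iterContract : ∀ {k : ℕ}, (Fin k → (Fin n → MvPolynomial (Fin n) ℂ)) →
    AlgForms n → AlgForms n
  | 0, _, ω => ω
  | _ + 1, θ, ω => contractVF n (θ 0) (iterContract (fun j => θ j.succ) ω)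

set_option synthInstance.maxHeartbeats 1000000
set_option maxHeartbeats 1600000
namespace Aux
variable {n : ℕ}

abbrev RR (n : ℕ) := MvPolynomial (Fin n) ℂ
abbrev VV (n : ℕ) := Fin n → RR n

def eV (j : Fin n) : VV n := Pi.single j 1

def Lf (v : VV n) : Module.Dual (RR n) (VV n) := ∑ j, v j • LinearMap.proj j

lemma contractVF_def (v : VV n) (x : AlgForms n) :
    contractVF n v x = CliffordAlgebra.contractLeft (Q := 0) (Lf v) x := rfl

lemma Lf_apply (v m : VV n) : Lf v m = ∑ j, v j * m j := by
  simp [Lf, LinearMap.sum_apply]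

lemma Lf_single (v : VV n) (i : Fin n) : Lf v (Pi.single i 1) = v i := by
  rw [Lf_apply]
  rw [Finset.sum_eq_single i]
  · simp
  · intro b _ hb; simp [Pi.single_apply, hb]
  · simp

lemma cv_add (x y : AlgForms n) (v : VV n) :
    contractVF n v (x + y) = contractVF n v x + contractVF n v y := map_add _ _ _

lemma cv_zsmul (c : ℤ) (x : AlgForms n) (v : VV n) :
    contractVF n v (c • x) = c • contractVF n v x := map_zsmul _ _ _

lemma cv_smul (c : RR n) (x : AlgForms n) (v : VV n) :
    contractVF n v (c • x) = c • contractVF n v x := map_smul _ _ _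

lemma cv_linear_v (v w : VV n) (x : AlgForms n) :
    contractVF n (v + w) x = contractVF n v x + contractVF n w x := by
  rw [contractVF_def, contractVF_def, contractVF_def]
  have : Lf (v + w) = Lf v + Lf w := by
    simp [Lf, add_smul, Finset.sum_add_distrib]
  rw [this, map_add, LinearMap.add_apply]

lemma cv_smul_v (c : RR n) (v : VV n) (x : AlgForms n) :
    contractVF n (c • v) x = c • contractVF n v x := by
  rw [contractVF_def, contractVF_def]
  have : Lf (c • v) = c • Lf v := by
    simp [Lf, smul_smul, Finset.smul_sum]
  rw [this, map_smul, LinearMap.smul_apply]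

lemma cv_ι_mul (v m : VV n) (b : AlgForms n) :
    contractVF n v (ExteriorAlgebra.ι _ m * b) = Lf v m • b - ExteriorAlgebra.ι _ m * contractVF n v b := by
  rw [contractVF_def, contractVF_def]
  exact CliffordAlgebra.contractLeft_ι_mul _ _ _

lemma cv_algebraMap (v : VV n) (r : RR n) :
    contractVF n v (algebraMap _ _ r) = 0 := by
  rw [contractVF_def]; exact CliffordAlgebra.contractLeft_algebraMap _ _ _

lemma cv_one (v : VV n) : contractVF n v 1 = 0 := by
  simpa using cv_algebraMap (n := n) v 1

lemma cv_cv (v : VV n) (x : AlgForms n) :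
    contractVF n v (contractVF n v x) = 0 := by
  rw [contractVF_def, contractVF_def]; exact CliffordAlgebra.contractLeft_contractLeft _ _

lemma cv_comm (v w : VV n) (x : AlgForms n) :
    contractVF n v (contractVF n w x) = -contractVF n w (contractVF n v x) := by
  rw [contractVF_def, contractVF_def, contractVF_def, contractVF_def]
  exact CliffordAlgebra.contractLeft_comm _ _ _


/-! ### Sign equivalence -/

def SR (x y : AlgForms n) : Prop := ∃ ε : ℤˣ, x = (ε : ℤ) • y

lemma SR_of_eq {x y : AlgForms n} (h : x = y) : SR x y := ⟨1, by simp [h]⟩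

lemma SR.refl (x : AlgForms n) : SR x x := SR_of_eq rfl

lemma unit_smul_unit_smul (e f : ℤˣ) (x : AlgForms n) :
    (e : ℤ) • (f : ℤ) • x = ((e * f : ℤˣ) : ℤ) • x := by
  rw [smul_smul]; norm_cast

lemma SR.symm {x y : AlgForms n} (h : SR x y) : SR y x := by
  obtain ⟨e, rfl⟩ := h
  refine ⟨e, ?_⟩
  rw [unit_smul_unit_smul, Int.units_mul_self, Units.val_one, one_smul]

lemma SR.trans {x y z : AlgForms n} (h : SR x y) (h' : SR y z) : SR x z := by
  obtain ⟨e, rfl⟩ := h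
  obtain ⟨f, rfl⟩ := h'
  exact ⟨e * f, unit_smul_unit_smul e f z⟩

lemma SR.zero_of {x : AlgForms n} (h : SR x 0) : x = 0 := by
  obtain ⟨e, rfl⟩ := h; simp

lemma SR.mul_right {x y z : AlgForms n} (h : SR x y) : SR (x * z) (y * z) := by
  obtain ⟨e, rfl⟩ := h
  exact ⟨e, by rw [smul_mul_assoc]⟩

lemma SR.mul_left {x y z : AlgForms n} (h : SR y z) : SR (x * y) (x * z) := by
  obtain ⟨e, rfl⟩ := h
  exact ⟨e, by rw [mul_smul_comm]⟩

lemma SR.mul {x y z w : AlgForms n} (h : SR x y) (h' : SR z w) : SR (x * z) (y * w) :=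
  (h.mul_right).trans h'.mul_left

lemma SR.cv {x y : AlgForms n} (v : VV n) (h : SR x y) :
    SR (contractVF n v x) (contractVF n v y) := by
  obtain ⟨e, rfl⟩ := h
  exact ⟨e, by rw [cv_zsmul]⟩

lemma SR.neg_right {x y : AlgForms n} (h : SR x y) : SR x (-y) := by
  obtain ⟨e, rfl⟩ := h
  exact ⟨-e, by simp⟩

lemma SR.neg_left {x y : AlgForms n} (h : SR x y) : SR (-x) y := by
  obtain ⟨e, rfl⟩ := h
  exact ⟨-e, by simp⟩

lemma SR.zsmul_unit_left {x y : AlgForms n} (e : ℤˣ) (h : SR x y) : SR ((e : ℤ) • x) y := by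
  obtain ⟨f, rfl⟩ := h
  exact ⟨e * f, unit_smul_unit_smul e f y⟩

/-! ### Iterated contraction along a list -/

def Con (l : List (VV n)) (x : AlgForms n) : AlgForms n :=
  l.foldr (fun v acc => contractVF n v acc) x

@[simp] lemma Con_nil (x : AlgForms n) : Con [] x = x := rfl

@[simp] lemma Con_cons (v : VV n) (l : List (VV n)) (x : AlgForms n) :
    Con (v :: l) x = contractVF n v (Con l x) := rfl

lemma Con_append (l₁ l₂ : List (VV n)) (x : AlgForms n) :
    Con (l₁ ++ l₂) x = Con l₁ (Con l₂ x) := by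
  induction l₁ with
  | nil => rfl
  | cons v l ih => simp [ih]

lemma cv_zero (v : VV n) : contractVF n v (0 : AlgForms n) = 0 := map_zero _

lemma Con_zero (l : List (VV n)) : Con l (0 : AlgForms n) = 0 := by
  induction l with
  | nil => rfl
  | cons v l ih => simp [ih, cv_zero]

lemma Con_zsmul (l : List (VV n)) (c : ℤ) (x : AlgForms n) :
    Con l (c • x) = c • Con l x := by
  induction l with
  | nil => rfl
  | cons v l ih => rw [Con_cons, Con_cons, ih, cv_zsmul]

lemma SR.con {x y : AlgForms n} (l : List (VV n)) (h : SR x y) : SR (Con l x) (Con l y) := by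
  obtain ⟨e, rfl⟩ := h
  exact ⟨e, by rw [Con_zsmul]⟩

lemma Con_perm {l l' : List (VV n)} (h : l.Perm l') (x : AlgForms n) :
    SR (Con l x) (Con l' x) := by
  induction h with
  | nil => exact SR.refl _
  | cons v _ ih => exact ih.cv v
  | swap a b l =>
      simp only [Con_cons]
      exact (SR_of_eq (cv_comm _ _ _)).trans ((SR.refl _).neg_left)
  | trans _ _ ih₁ ih₂ => exact ih₁.trans ih₂

/-! ### Monomials -/

def prodDx (l : List (Fin n)) : AlgForms n := (l.map (dxF n)).prod

@[simp] lemma prodDx_nil : prodDx ([] : List (Fin n)) = 1 := rfl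

@[simp] lemma prodDx_cons (a : Fin n) (l : List (Fin n)) :
    prodDx (a :: l) = dxF n a * prodDx l := by
  simp [prodDx]

lemma prodDx_append (l₁ l₂ : List (Fin n)) :
    prodDx (l₁ ++ l₂) = prodDx l₁ * prodDx l₂ := by
  simp [prodDx]

lemma dx_sq (a : Fin n) : dxF n a * dxF n a = 0 := ExteriorAlgebra.ι_sq_zero _

lemma dx_anticomm (a b : Fin n) : dxF n a * dxF n b = -(dxF n b * dxF n a) := by
  have h := ExteriorAlgebra.ι_sq_zero (R := RR n)
    ((Pi.single a 1 : VV n) + Pi.single b 1)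
  rw [map_add, add_mul, mul_add, mul_add] at h
  have ha := ExteriorAlgebra.ι_sq_zero (R := RR n) (Pi.single a 1 : VV n)
  have hb := ExteriorAlgebra.ι_sq_zero (R := RR n) (Pi.single b 1 : VV n)
  rw [ha, hb] at h
  unfold dxF
  linear_combination (norm := abel) h

lemma dx_mul_prodDx_of_mem {a : Fin n} {l : List (Fin n)} (h : a ∈ l) :
    dxF n a * prodDx l = 0 := by
  induction l with
  | nil => simp at h
  | cons b l ih =>
      rcases List.mem_cons.mp h with rfl | h
      · rw [prodDx_cons, ← mul_assoc, dx_sq, zero_mul]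
      · rw [prodDx_cons, ← mul_assoc, dx_anticomm a b, neg_mul, mul_assoc, ih h,
          mul_zero, neg_zero]

lemma prodDx_eq_zero_of_not_nodup {l : List (Fin n)} (h : ¬ l.Nodup) : prodDx l = 0 := by
  induction l with
  | nil => simp at h
  | cons a l ih =>
      rw [List.nodup_cons] at h
      push_neg at h
      by_cases ha : a ∈ l
      · rw [prodDx_cons, dx_mul_prodDx_of_mem ha]
      · rw [prodDx_cons, ih (h ha), mul_zero]


/-! ### Contraction of monomials by basis directions -/

lemma cv_e_prodDx_of_not_mem {j : Fin n} {l : List (Fin n)} (h : j ∉ l) :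
    contractVF n (eV j) (prodDx l) = 0 := by
  induction l with
  | nil => simpa [prodDx] using cv_one (eV j)
  | cons a l ih =>
      have haj : a ≠ j := fun hc => h (hc ▸ List.mem_cons_self (a := a) (l := l))
      rw [prodDx_cons]
      show contractVF n (eV j) (ExteriorAlgebra.ι _ (Pi.single a 1) * prodDx l) = 0
      rw [cv_ι_mul, Lf_single, ih (fun hc => h (List.mem_cons_of_mem a hc))]
      rw [eV, Pi.single_eq_of_ne haj]
      simp

lemma cv_e_prodDx_of_mem {j : Fin n} {l : List (Fin n)} (hl : l.Nodup) (h : j ∈ l) :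
    SR (contractVF n (eV j) (prodDx l)) (prodDx (l.erase j)) := by
  induction l with
  | nil => simp at h
  | cons a l ih =>
      rw [List.nodup_cons] at hl
      rw [prodDx_cons]
      show SR (contractVF n (eV j) (ExteriorAlgebra.ι _ (Pi.single a 1) * prodDx l)) _
      rw [cv_ι_mul, Lf_single]
      rcases List.mem_cons.mp h with rfl | hjl
      · rw [cv_e_prodDx_of_not_mem hl.1, mul_zero, sub_zero, eV, Pi.single_eq_same,
          List.erase_cons_head]
        exact SR_of_eq (one_smul _ _)
      · have haj : a ≠ j := fun hc => hl.1 (hc ▸ hjl)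
        rw [eV, Pi.single_eq_of_ne haj, zero_smul, zero_sub,
          List.erase_cons_tail (by simpa using haj)]
        rw [prodDx_cons]
        exact ((ih hl.2 hjl).mul_left (x := dxF n a)).neg_left

/-- Erasing from a filtered nodup list. -/
lemma filter_erase {α : Type*} [DecidableEq α] (q : α → Bool) (a : α) :
    ∀ (l : List α), l.Nodup →
      (l.filter q).erase a = l.filter (fun x => q x && !(x == a))
  | [], _ => by simp
  | b :: l, hl => by
      rw [List.nodup_cons] at hl
      by_cases hq : q b
      · by_cases hba : b = a
        · subst hba
          rw [List.filter_cons_of_pos hq, List.erase_cons_head,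
            List.filter_cons_of_neg (by simp [hq]),
            List.filter_congr (fun x hx => ?_)]
          have : x ≠ b := fun hc => hl.1 (hc ▸ hx)
          simp [this]
        · rw [List.filter_cons_of_pos hq, List.erase_cons_tail (by simpa using hba),
            List.filter_cons_of_pos (by simp [hq, hba]), filter_erase q a l hl.2]
      · rw [List.filter_cons_of_neg hq, List.filter_cons_of_neg (by simp [hq]),
          filter_erase q a l hl.2]

lemma topForm_eq : topForm n = prodDx (List.finRange n) := by
  rw [topForm, List.ofFn_eq_map]; rfl

/-- Iterated basis contraction of the top form. -/
lemma con_e_top (I : List (Fin n)) (hI : I.Nodup) :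
    SR (Con (I.map eV) (topForm n))
      (prodDx ((List.finRange n).filter (fun j => decide (j ∉ I)))) := by
  induction I with
  | nil =>
      rw [List.map_nil, Con_nil, topForm_eq]
      refine SR_of_eq (congrArg prodDx ?_)
      rw [show (fun j : Fin n => decide (j ∉ ([] : List (Fin n)))) = fun _ => true from
        funext (fun j => by simp), List.filter_true]
  | cons j I' ih =>
      rw [List.nodup_cons] at hI
      rw [List.map_cons, Con_cons]
      refine ((ih hI.2).cv (eV j)).trans ?_
      have hmem : j ∈ (List.finRange n).filter (fun x => decide (x ∉ I')) := by
        rw [List.mem_filter]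
        exact ⟨List.mem_finRange j, by simpa using hI.1⟩
      have hnd : ((List.finRange n).filter (fun x => decide (x ∉ I'))).Nodup :=
        (List.nodup_finRange n).filter _
      refine (cv_e_prodDx_of_mem hnd hmem).trans (SR_of_eq ?_)
      rw [filter_erase _ _ _ (List.nodup_finRange n)]
      refine congrArg prodDx (List.filter_congr (fun x _ => ?_))
      by_cases hxj : x = j
      · simp [hxj]
      · simp [hxj, List.mem_cons]


/-! ### Monomial spans -/

def monSpan (m : ℕ) : Submodule (RR n) (AlgForms n) :=
  Submodule.span _ {x | ∃ l : List (Fin n), l.length = m ∧ x = prodDx l}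

lemma prodDx_mem_monSpan (l : List (Fin n)) : prodDx l ∈ monSpan (n := n) l.length :=
  Submodule.subset_span ⟨l, rfl, rfl⟩

lemma dx_mul_monSpan {m : ℕ} {x : AlgForms n} (a : Fin n) (hx : x ∈ monSpan (n := n) m) :
    dxF n a * x ∈ monSpan (n := n) (m + 1) := by
  refine Submodule.span_induction ?_ ?_ ?_ ?_ hx
  · rintro x ⟨l, rfl, rfl⟩
    exact Submodule.subset_span ⟨a :: l, rfl, (prodDx_cons a l).symm⟩
  · simp
  · intro y z _ _ hy hz
    rw [mul_add]; exact add_mem hy hz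
  · intro c y _ hy
    rw [mul_smul_comm]; exact Submodule.smul_mem _ _ hy

lemma cv_prodDx_mem (v : VV n) (l : List (Fin n)) :
    contractVF n v (prodDx l) ∈ monSpan (n := n) (l.length - 1) := by
  induction l with
  | nil => simpa [cv_one] using Submodule.zero_mem _
  | cons a l ih =>
      rw [prodDx_cons]
      show contractVF n v (ExteriorAlgebra.ι _ (Pi.single a 1) * prodDx l) ∈ _
      rw [cv_ι_mul]
      refine sub_mem (Submodule.smul_mem _ _ ?_) ?_
      · simpa using prodDx_mem_monSpan (n := n) l
      · cases l with
        | nil =>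
            rw [prodDx_nil, cv_one, mul_zero]
            exact Submodule.zero_mem _
        | cons b l' =>
            have := dx_mul_monSpan a ih
            simpa [dxF] using this

lemma cv_monSpan {m : ℕ} {x : AlgForms n} (v : VV n) (hx : x ∈ monSpan (n := n) m) :
    contractVF n v x ∈ monSpan (n := n) (m - 1) := by
  refine Submodule.span_induction ?_ ?_ ?_ ?_ hx
  · rintro x ⟨l, rfl, rfl⟩
    exact cv_prodDx_mem v l
  · simpa [cv_zero] using Submodule.zero_mem _
  · intro y z _ _ hy hz
    rw [cv_add]; exact add_mem hy hz
  · intro c y _ hy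
    rw [cv_smul]; exact Submodule.smul_mem _ _ hy

lemma con_top_mem_monSpan (Q : List (VV n)) :
    Con Q (topForm n) ∈ monSpan (n := n) (n - Q.length) := by
  induction Q with
  | nil => simpa [topForm_eq] using prodDx_mem_monSpan (n := n) (List.finRange n)
  | cons v Q ih =>
      rw [Con_cons]
      have := cv_monSpan v ih
      have harith : n - Q.length - 1 = n - (v :: Q).length := by
        simp [List.length_cons]; omega
      rwa [harith] at this

lemma monSpan_mul_eq_zero {m₁ m₂ : ℕ} {x y : AlgForms n}
    (hx : x ∈ monSpan (n := n) m₁) (hy : y ∈ monSpan (n := n) m₂) (h : n < m₁ + m₂) :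
    x * y = 0 := by
  refine Submodule.span_induction ?_ ?_ ?_ ?_ hx
  · rintro x ⟨l₁, rfl, rfl⟩
    refine Submodule.span_induction ?_ ?_ ?_ ?_ hy
    · rintro y ⟨l₂, rfl, rfl⟩
      rw [← prodDx_append]
      refine prodDx_eq_zero_of_not_nodup (fun hnd => ?_)
      have := hnd.length_le_card
      simp [List.length_append] at this
      omega
    · simp
    · intro y z _ _ hy hz
      rw [mul_add, hy, hz, add_zero]
    · intro c y _ hy
      rw [mul_smul_comm, hy, smul_zero]
  · simp
  · intro y' z _ _ hy' hz
    rw [add_mul, hy', hz, add_zero]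
  · intro c y' _ hy'
    rw [smul_mul_assoc, hy', smul_zero]

lemma con_top_mul_con_top {Q₁ Q₂ : List (VV n)}
    (h : Q₁.length + Q₂.length + 1 = n) :
    Con Q₁ (topForm n) * Con Q₂ (topForm n) = 0 := by
  refine monSpan_mul_eq_zero (con_top_mem_monSpan Q₁) (con_top_mem_monSpan Q₂) ?_
  omega

/-! ### Grading -/

def Hm (p : ℕ) : Submodule (RR n) (AlgForms n) :=
  (LinearMap.range (ExteriorAlgebra.ι (RR n) (M := VV n))) ^ p

lemma prodDx_mem_Hm (l : List (Fin n)) : prodDx l ∈ Hm (n := n) l.length := by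
  induction l with
  | nil =>
      rw [prodDx_nil]
      simpa [Hm, pow_zero] using (Submodule.one_le.mp le_rfl)
  | cons a l ih =>
      rw [prodDx_cons]
      have : dxF n a ∈ LinearMap.range (ExteriorAlgebra.ι (RR n) (M := VV n)) :=
        ⟨Pi.single a 1, rfl⟩
      have := Submodule.mul_mem_mul this ih
      rwa [Hm, List.length_cons, pow_succ'] 

lemma topForm_mem_Hm : topForm n ∈ Hm (n := n) n := by
  have := prodDx_mem_Hm (n := n) (List.finRange n)
  rwa [List.length_finRange, ← topForm_eq] at this

lemma Hm_zero_elim {x : AlgForms n} (hx : x ∈ Hm (n := n) 0) :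
    ∃ r : RR n, x = algebraMap _ _ r := by
  rw [Hm, pow_zero] at hx
  obtain ⟨r, hr⟩ := Submodule.mem_one.mp hx
  exact ⟨r, hr.symm⟩

lemma cv_mem_Hm {p : ℕ} {x : AlgForms n} (v : VV n) (hx : x ∈ Hm (n := n) p) :
    contractVF n v x ∈ Hm (n := n) (p - 1) := by
  induction p generalizing x with
  | zero =>
      obtain ⟨r, rfl⟩ := Hm_zero_elim hx
      rw [cv_algebraMap]
      exact Submodule.zero_mem _
  | succ q ih =>
      rw [Hm, pow_succ'] at hx
      refine Submodule.mul_induction_on hx ?_ ?_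
      · rintro m ⟨w, rfl⟩ y hy
        rw [cv_ι_mul]
        refine sub_mem (Submodule.smul_mem _ _ (by simpa [Hm] using hy)) ?_
        cases q with
        | zero =>
            obtain ⟨r, rfl⟩ := Hm_zero_elim hy
            rw [cv_algebraMap, mul_zero]
            exact Submodule.zero_mem _
        | succ q' =>
            have h1 := ih hy
            have : (ExteriorAlgebra.ι (RR n)) w ∈
                LinearMap.range (ExteriorAlgebra.ι (RR n) (M := VV n)) := ⟨w, rfl⟩
            have h2 := Submodule.mul_mem_mul this h1
            rw [Nat.succ_sub_one] at *
            rwa [Hm, ← pow_succ'] at h2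
      · intro y z hy hz
        rw [cv_add]
        exact add_mem hy hz

lemma con_mem_Hm {p : ℕ} {x : AlgForms n} (l : List (VV n)) (hx : x ∈ Hm (n := n) p) :
    Con l x ∈ Hm (n := n) (p - l.length) := by
  induction l generalizing p with
  | nil => simpa using hx
  | cons v l ih =>
      rw [Con_cons]
      have := cv_mem_Hm v (ih hx)
      have harith : p - l.length - 1 = p - (v :: l).length := by
        simp [List.length_cons]; omega
      rwa [harith] at this

/-- The antiderivation law on homogeneous elements. -/
lemma ader {p : ℕ} {x : AlgForms n} (hx : x ∈ Hm (n := n) p) (v : VV n) (y : AlgForms n) :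
    contractVF n v (x * y) =
      contractVF n v x * y + ((-1 : ℤ) ^ p) • (x * contractVF n v y) := by
  induction p generalizing x with
  | zero =>
      obtain ⟨r, rfl⟩ := Hm_zero_elim hx
      rw [contractVF_def, CliffordAlgebra.contractLeft_algebraMap_mul, cv_algebraMap,
        zero_mul, zero_add, pow_zero, one_smul, contractVF_def]
  | succ q ih =>
      rw [Hm, pow_succ'] at hx
      refine Submodule.mul_induction_on hx ?_ ?_
      · rintro m ⟨w, rfl⟩ z hz
        rw [mul_assoc, cv_ι_mul, ih hz, cv_ι_mul]
        rw [mul_add, sub_mul, smul_mul_assoc, mul_assoc, mul_smul_comm,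
          pow_succ, mul_comm ((-1:ℤ)^q) (-1), neg_one_mul, neg_smul]
        rw [mul_assoc ((ExteriorAlgebra.ι (RR n)) w) z (contractVF n v y)]
        abel
      · intro y₁ y₂ h₁ h₂
        rw [add_mul, cv_add, h₁, h₂, cv_add, add_mul, add_mul, smul_add]
        abel


/-! ### The vanishing lemma -/

lemma Zmain : ∀ (F P Q : List (VV n)),
    P.length + Q.length + F.length + 1 = n →
    Con P (Con F (topForm n)) * Con Q (Con F (topForm n)) = 0 := by
  intro F
  induction F with
  | nil =>
      intro P Q h
      simp only [Con_nil]
      exact con_top_mul_con_top (by simpa using h)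
  | cons v F' ih =>
      intro P Q h
      set X := Con F' (topForm n) with hX
      have hP : Con P (Con (v :: F') (topForm n)) = Con (P ++ [v]) X := by
        rw [Con_append]; rfl
      have hQ : Con Q (Con (v :: F') (topForm n)) = Con (Q ++ [v]) X := by
        rw [Con_append]; rfl
      have sP : SR (Con P (Con (v :: F') (topForm n))) (contractVF n v (Con P X)) :=
        (SR_of_eq hP).trans (Con_perm (List.perm_append_singleton v P) X)
      have sQ : SR (Con Q (Con (v :: F') (topForm n))) (contractVF n v (Con Q X)) :=
        (SR_of_eq hQ).trans (Con_perm (List.perm_append_singleton v Q) X)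
      refine SR.zero_of ((sP.mul sQ).trans (SR_of_eq ?_))
      have hA : Con P X ∈ Hm (n := n) (n - F'.length - P.length) := by
        rw [hX]; exact con_mem_Hm P (con_mem_Hm F' topForm_mem_Hm)
      have hAB : Con P X * contractVF n v (Con Q X) = 0 := by
        have hc : contractVF n v (Con Q X) = Con (v :: Q) X := rfl
        rw [hc, hX]
        refine ih P (v :: Q) ?_
        simp only [List.length_cons] at h ⊢
        omega
      have h0 := ader hA v (contractVF n v (Con Q X))
      rw [cv_cv, mul_zero, smul_zero, add_zero, hAB, cv_zero] at h0
      exact h0.symm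

/-! ### The exchange lemma -/

lemma Mmain : ∀ (U V F : List (VV n)),
    U.length + V.length + F.length = n →
    SR (Con U (Con F (topForm n)) * Con V (Con F (topForm n)))
      (Con (U ++ V) (Con F (topForm n)) * Con F (topForm n)) := by
  intro U
  induction U with
  | nil =>
      intro V F h
      simp only [Con_nil, List.nil_append]
      have hV : Con V (Con F (topForm n)) ∈ Hm (n := n) (n - F.length - V.length) :=
        con_mem_Hm V (con_mem_Hm F topForm_mem_Hm)
      have hz : n - F.length - V.length = 0 := by
        simp only [List.length_nil] at h
        omega
      rw [hz] at hV
      obtain ⟨r, hr⟩ := Hm_zero_elim hV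
      rw [hr]
      exact SR_of_eq (Algebra.commutes r _).symm
  | cons u U' ih =>
      intro V F h
      set X := Con F (topForm n) with hX
      have hA : Con U' X ∈ Hm (n := n) (n - F.length - U'.length) := by
        rw [hX]; exact con_mem_Hm U' (con_mem_Hm F topForm_mem_Hm)
      set p : ℕ := n - F.length - U'.length
      have hz : Con U' X * Con V X = 0 := by
        rw [hX]
        refine Zmain F U' V ?_
        simp only [List.length_cons] at h
        omega
      have h0 := ader hA u (Con V X)
      rw [hz, cv_zero] at h0
      have key : Con (u :: U') X * Con V X
          = (-(-1 : ℤ) ^ p) • (Con U' X * Con (u :: V) X) := by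
        have h1 : contractVF n u (Con U' X) * Con V X
            = -(((-1 : ℤ) ^ p) • (Con U' X * contractVF n u (Con V X))) := by
          rw [eq_neg_iff_add_eq_zero]
          exact h0.symm
        rw [Con_cons, h1, ← neg_smul]
        rfl
      have s1 : SR (Con (u :: U') X * Con V X) (Con U' X * Con (u :: V) X) := by
        refine ⟨-(-1 : ℤˣ) ^ p, ?_⟩
        rw [key]
        norm_num
      have s2 := ih (u :: V) F (by simp only [List.length_cons] at h ⊢; omega)
      rw [← hX] at s2
      have s3 : SR (Con (U' ++ u :: V) X) (Con ((u :: U') ++ V) X) :=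
        Con_perm (List.perm_middle (a := u) (l₁ := U') (l₂ := V)) X
      exact s1.trans (s2.trans s3.mul_right)


/-! ### Bridges to the statement's definitions -/

lemma iterContract_eq_con {k : ℕ} (θ : Fin k → VV n) (x : AlgForms n) :
    iterContract n θ x = Con (List.ofFn θ) x := by
  induction k with
  | zero => rfl
  | succ k ih =>
      show contractVF n (θ 0) (iterContract n (fun j => θ j.succ) x) = _
      rw [ih, List.ofFn_succ, Con_cons]

lemma KcSeq_eq_con (l : List (Fin n)) (x : AlgForms n) :
    KcSeq n l x = Con ((l.map eV).reverse) x := by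
  rw [Con, List.foldr_reverse, List.foldl_map]
  rfl

/-! ### Permutation bookkeeping on `Fin d` -/

section perms
variable {d : ℕ} (a : Fin d)

lemma pLE : ((List.finRange d).filter (fun k => decide (k ≤ a))).Perm
    (a :: (List.finRange d).filter (fun k => decide (k < a))) := by
  have ha : a ∈ (List.finRange d).filter (fun k => decide (k ≤ a)) := by
    rw [List.mem_filter]
    exact ⟨List.mem_finRange a, by simp⟩
  refine (List.perm_cons_erase ha).trans ?_
  rw [filter_erase _ _ _ (List.nodup_finRange d)]
  refine List.Perm.cons a (List.Perm.of_eq (List.filter_congr (fun x _ => ?_)))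
  by_cases hxa : x = a
  · simp [hxa]
  · have : (x < a) ↔ (x ≤ a ∧ x ≠ a) := by
      constructor
      · intro h; exact ⟨le_of_lt h, ne_of_lt h⟩
      · intro h; exact lt_of_le_of_ne h.1 h.2
    simp [hxa, this]

lemma pGE : ((List.finRange d).filter (fun k => decide (a ≤ k))).Perm
    (a :: (List.finRange d).filter (fun k => decide (a < k))) := by
  have ha : a ∈ (List.finRange d).filter (fun k => decide (a ≤ k)) := by
    rw [List.mem_filter]
    exact ⟨List.mem_finRange a, by simp⟩
  refine (List.perm_cons_erase ha).trans ?_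
  rw [filter_erase _ _ _ (List.nodup_finRange d)]
  refine List.Perm.cons a (List.Perm.of_eq (List.filter_congr (fun x _ => ?_)))
  by_cases hxa : x = a
  · simp [hxa]
  · have : (a < x) ↔ (a ≤ x ∧ x ≠ a) := by
      constructor
      · intro h; exact ⟨le_of_lt h, (ne_of_lt h).symm⟩
      · intro h; exact lt_of_le_of_ne h.1 (Ne.symm h.2)
    simp [hxa, this]

lemma pAll : ((List.finRange d).filter (fun k => decide (k < a)) ++
      a :: (List.finRange d).filter (fun k => decide (a < k))).Perm (List.finRange d) := by
  have h1 := List.filter_append_perm (fun k => decide (k ≤ a)) (List.finRange d)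
  have h2 : (List.finRange d).filter (fun k => !decide (k ≤ a))
      = (List.finRange d).filter (fun k => decide (a < k)) := by
    refine List.filter_congr (fun x _ => ?_)
    rw [← decide_not]
    exact decide_eq_decide.mpr not_le
  rw [h2] at h1
  exact (List.perm_middle.trans (((pLE a).symm).append (List.Perm.refl _))).trans h1

lemma lenLT : ((List.finRange d).filter (fun k => decide (k ≤ a))).length
    = ((List.finRange d).filter (fun k => decide (k < a))).length + 1 := by
  simpa using (pLE a).length_eq

lemma lenGT : ((List.finRange d).filter (fun k => decide (a ≤ k))).length
    = ((List.finRange d).filter (fun k => decide (a < k))).length + 1 := by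
  simpa using (pGE a).length_eq

lemma lenAll : ((List.finRange d).filter (fun k => decide (k < a))).length +
    ((List.finRange d).filter (fun k => decide (a < k))).length + 1 = d := by
  have := (pAll a).length_eq
  simp [List.length_append] at this
  omega

end perms

end Aux

/-- With `Ω = E ⌟ (dx_1 ∧ ⋯ ∧ dx_n)` for an `(n-d)`-polyvector field `E`, and
distinct coordinate directions `i_0, …, i_{d-1}`, writing
`dw = ⋀_{j ∉ {i_0,…,i_{d-1}}} dx_j`, one has
`(K_{i_a}⋯K_{i_0}Ω) ∧ (K_{i_{d-1}}⋯K_{i_a}Ω) = ± (E ⌟ dw) · (K_{i_a}Ω)`,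
up to a sign depending only on the index pattern. -/
theorem contraction_wedge_identity (d : ℕ)
    (θ : Fin (n - d) → Fin n → MvPolynomial (Fin n) ℂ)
    (i : Fin d → Fin n) (hi : Function.Injective i) (a : Fin d) :
    ∃ ε : ℤˣ,
      KcSeq n (((List.finRange d).filter (fun k => decide (k ≤ a))).map i)
          (iterContract n θ (topForm n)) *
        KcSeq n (((List.finRange d).filter (fun k => decide (a ≤ k))).map i)
          (iterContract n θ (topForm n)) =
      (ε : ℤ) •
        (iterContract n θ
            ((((List.finRange n).filter (fun j => decide (∀ k, i k ≠ j))).map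
              (dxF n)).prod) *
          Kc n (i a) (iterContract n θ (topForm n))) := by
  classical
  have hd : 0 < d := a.pos
  have hdn : d ≤ n := by simpa using Fintype.card_le_of_injective i hi
  -- names
  let Θ : List (Aux.VV n) := List.ofFn θ
  have hΘlen : Θ.length = n - d := by simp [Θ]
  let LT := (List.finRange d).filter (fun k => decide (k < a))
  let GT := (List.finRange d).filter (fun k => decide (a < k))
  let LE := (List.finRange d).filter (fun k => decide (k ≤ a))
  let GE := (List.finRange d).filter (fun k => decide (a ≤ k))
  let U : List (Aux.VV n) := (LT.map i).map Aux.eV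
  let V : List (Aux.VV n) := (GT.map i).map Aux.eV
  let F : List (Aux.VV n) := Aux.eV (i a) :: Θ
  let Φ : AlgForms n := Aux.Con F (topForm n)
  have hlen : LT.length + GT.length + 1 = d := Aux.lenAll a
  -- the two factors
  have sA : Aux.SR (KcSeq n (LE.map i) (iterContract n θ (topForm n))) (Aux.Con U Φ) := by
    rw [Aux.iterContract_eq_con, Aux.KcSeq_eq_con, ← Aux.Con_append]
    refine (Aux.Con_perm ?_ (topForm n)).trans (Aux.SR_of_eq (Aux.Con_append _ _ _))
    refine ((List.reverse_perm _).append_right Θ).trans ?_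
    have h1 : (((LE.map i)).map Aux.eV).Perm (Aux.eV (i a) :: U) :=
      ((Aux.pLE a).map i).map Aux.eV
    exact (h1.append_right Θ).trans List.perm_middle.symm
  have sB : Aux.SR (KcSeq n (GE.map i) (iterContract n θ (topForm n))) (Aux.Con V Φ) := by
    rw [Aux.iterContract_eq_con, Aux.KcSeq_eq_con, ← Aux.Con_append]
    refine (Aux.Con_perm ?_ (topForm n)).trans (Aux.SR_of_eq (Aux.Con_append _ _ _))
    refine ((List.reverse_perm _).append_right Θ).trans ?_
    have h1 : (((GE.map i)).map Aux.eV).Perm (Aux.eV (i a) :: V) :=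
      ((Aux.pGE a).map i).map Aux.eV
    exact (h1.append_right Θ).trans List.perm_middle.symm
  -- the exchange lemma
  have hM := Aux.Mmain U V F (by
    have : U.length = LT.length := by simp [U]
    have : V.length = GT.length := by simp [V]
    simp only [U, V, F, List.length_cons, List.length_map, hΘlen]
    omega)
  -- the scalar part
  have sScal : Aux.SR (Aux.Con (U ++ V) Φ)
      (Aux.Con Θ ((((List.finRange n).filter (fun j => decide (∀ k, i k ≠ j))).map
        (dxF n)).prod)) := by
    have e1 : Aux.Con (U ++ V) Φ = Aux.Con ((U ++ V) ++ F) (topForm n) :=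
      (Aux.Con_append _ _ _).symm
    let I : List (Fin n) := (LT.map i) ++ (i a :: GT.map i)
    have hmapI : I.map Aux.eV = U ++ (Aux.eV (i a) :: V) := by
      rw [List.map_append]
      rfl
    have hIperm : I.Perm ((List.finRange d).map i) := by
      have h := (Aux.pAll a).map i
      rw [List.map_append] at h
      exact h
    have hInd : I.Nodup :=
      hIperm.nodup_iff.mpr ((List.nodup_finRange d).map hi)
    have hperm2 : ((U ++ V) ++ F).Perm (Θ ++ I.map Aux.eV) := by
      rw [hmapI]
      refine (List.Perm.of_eq (List.append_assoc U V F)).trans ?_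
      refine ((List.perm_middle (a := Aux.eV (i a)) (l₁ := V) (l₂ := Θ)).append_left U).trans ?_
      refine (List.Perm.of_eq ?_).trans List.perm_append_comm
      simp [List.append_assoc]
    have efil : (List.finRange n).filter (fun j => decide (j ∉ I))
        = (List.finRange n).filter (fun j => decide (∀ k, i k ≠ j)) := by
      refine List.filter_congr (fun x _ => decide_eq_decide.mpr ?_)
      have hx : x ∈ I ↔ ∃ k, i k = x := by
        rw [hIperm.mem_iff]
        simp
      simp [hx, not_exists]
    have sCe := (Aux.con_e_top I hInd).con Θ
    rw [efil] at sCe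
    exact ((Aux.SR_of_eq e1).trans (Aux.Con_perm hperm2 (topForm n))).trans
      ((Aux.SR_of_eq (Aux.Con_append _ _ _)).trans sCe)
  have final := (sA.mul sB).trans (hM.trans sScal.mul_right)
  simp only [Aux.iterContract_eq_con] at final ⊢
  exact final

end
end

section
/- Let $S=\mathbb{C}[x_1,\dots,x_n]$ and let $F_0,\dots,F_d\in S$. Suppose there is a $d$-form $\Omega$ and an identity $\sum_{j=0}^d(-1)^j F_j\, dF_0\wedge\cdots\wedge\widehat{dF_j}\wedge\cdots\wedge dF_d = J_F\,\Omega$ defining the toric Jacobian $J_F$. If moreover each $F_j$ satisfies the Euler formulas $c_I^\beta F_j = \sum_{k=0}^d(-1)^k\det(e_{I\setminus\{i_k\}})\, x_{i_k}\frac{\partial F_j}{\partial x_{i_k}}$ for an ordered index set $I=(i_0,\dots,i_d)$ with $c_I^\beta\ne0$, then $J_F = \det\left(\partial F_j/\partial x_{i_k}\right)_{0\le j,k\le d}\big/\big(c_I^\beta\,\hat{x}_I\big)$, where $\hat{x}_I=\prod_{i\notin I}x_i$. -/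
open MvPolynomial

set_option synthInstance.maxHeartbeats 1000000
set_option maxHeartbeats 1000000

noncomputable section

variable (n : ℕ)

/-- The exterior derivative `dF = ∑ (∂F/∂x_i) dx_i` of a polynomial, as a 1-form. -/
def dPoly (F : MvPolynomial (Fin n) ℂ) : AlgForms n :=
  ExteriorAlgebra.ι _ (fun i => pderiv i F)

/-- The toric Euler form `Ω = ∑_{|J| = d} det(e_J) x̂_J dx_J`, the sum being over
`d`-element subsets `J ⊆ {1, …, n}` with `dx_J` taken in increasing order. -/
def toricOmega (d : ℕ) (e : Fin n → Fin d → ℤ) : AlgForms n :=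
  ∑ s : {s : Finset (Fin n) // s.card = d},
    ((Matrix.det (Matrix.of fun j k : Fin d =>
        e ((s.1.orderIsoOfFin s.2 k : Fin n)) j) : MvPolynomial (Fin n) ℂ) *
      ∏ i ∈ s.1ᶜ, X i) • ((s.1.sort (· ≤ ·)).map (dxF n)).prod

/-- The constant `c_I^β`: determinant of the matrix with first row `(b_i)_{i ∈ I}`
and remaining rows the coordinates of the `e_i`, `i ∈ I`. -/
def cBeta (d : ℕ) (e : Fin n → Fin d → ℤ) (b : Fin n → ℤ)
    (I : Fin (d + 1) → Fin n) : ℤ :=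
  Matrix.det (Matrix.of fun r c : Fin (d + 1) =>
    Fin.cases (b (I c)) (fun j : Fin d => e (I c) j) r)

namespace ToricJacAux
variable {R : Type*} [CommRing R]

lemma det_cons_succAbove {d : ℕ} (w : Fin (d + 1) → R) (k₀ : Fin (d + 1)) :
    (Matrix.of (Fin.cons w (fun (l : Fin d) (k : Fin (d + 1)) =>
      if k₀.succAbove l = k then (1 : R) else 0))).det = (-1) ^ (k₀ : ℕ) * w k₀ := by
  rw [Matrix.det_succ_column _ k₀]
  rw [Fintype.sum_eq_single 0 (fun i hi => ?_)]
  · have hsub : (Matrix.of (Fin.cons w (fun (l : Fin d) (k : Fin (d + 1)) =>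
        if k₀.succAbove l = k then (1 : R) else 0))).submatrix (0 : Fin (d+1)).succAbove
          k₀.succAbove = (1 : Matrix (Fin d) (Fin d) R) := by
      ext l m
      simp [Matrix.submatrix_apply, Fin.succAbove_zero, Fin.cons_succ, Matrix.one_apply,
        Fin.succAbove_right_inj]
    rw [hsub, Matrix.det_one]
    simp [Fin.cons_zero]
  · obtain ⟨l, rfl⟩ := Fin.eq_succ_of_ne_zero hi
    simp [Fin.cons_succ, Fin.succAbove_ne k₀ l]

lemma exists_perm_factor {d : ℕ} (h : Fin d → Fin (d + 1)) (hinj : Function.Injective h)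
    (k₀ : Fin (d + 1)) (hne : ∀ m, h m ≠ k₀) :
    ∃ σ : Equiv.Perm (Fin d), h = k₀.succAbove ∘ σ := by
  set u : Fin d → Fin d := fun m => (finSuccAboveEquiv k₀).symm ⟨h m, hne m⟩ with hu
  have huinj : Function.Injective u := by
    intro a b hab
    have := (finSuccAboveEquiv k₀).symm.injective hab
    exact hinj (Subtype.ext_iff.mp this)
  refine ⟨Equiv.ofBijective u (Finite.injective_iff_bijective.mp huinj), ?_⟩
  funext m
  have h2 : (finSuccAboveEquiv k₀) ((finSuccAboveEquiv k₀).symm ⟨h m, hne m⟩) = ⟨h m, hne m⟩ :=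
    (finSuccAboveEquiv k₀).apply_symm_apply _
  rw [finSuccAboveEquiv_apply] at h2
  have := Subtype.ext_iff.mp h2
  simpa [u] using this.symm

noncomputable def Amap (d : ℕ) {ι : Type*} (I : Fin (d + 1) → ι) (w : Fin (d + 1) → R) :
    (ι → R) [⋀^Fin d]→ₗ[R] R :=
  ((Matrix.detRowAlternating (R := R) (n := Fin (d + 1))).curryLeft w).compLinearMap
    (LinearMap.funLeft R R I)

lemma Amap_apply (d : ℕ) {ι : Type*} (I : Fin (d + 1) → ι) (w : Fin (d + 1) → R)
    (v : Fin d → (ι → R)) :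
    Amap d I w v = Matrix.det (Matrix.of (Fin.cons w (fun l k => v l (I k)))) := rfl

noncomputable def phi (d : ℕ) {ι : Type*} (I : Fin (d + 1) → ι) (w : Fin (d + 1) → R) :
    ExteriorAlgebra R (ι → R) →ₗ[R] R :=
  ExteriorAlgebra.liftAlternating
    (Function.update (fun i => (0 : (ι → R) [⋀^Fin i]→ₗ[R] R)) d (Amap d I w))

lemma phi_prod (d : ℕ) {ι : Type*} (I : Fin (d + 1) → ι) (w : Fin (d + 1) → R)
    (v : Fin d → (ι → R)) :
    phi d I w ((List.ofFn fun k => ExteriorAlgebra.ι R (v k)).prod) = Amap d I w v := by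
  rw [phi, ← ExteriorAlgebra.ιMulti_apply, ExteriorAlgebra.liftAlternating_apply_ιMulti,
    Function.update_self]

lemma det_cons_eq_updateRow {d : ℕ} (P : Matrix (Fin (d + 1)) (Fin (d + 1)) R)
    (w : Fin (d + 1) → R) (j : Fin (d + 1)) :
    Matrix.det (Matrix.of (Fin.cons w (fun l => P (j.succAbove l)))) =
      (-1) ^ (j : ℕ) * (P.updateRow j w).det := by
  have h0 : (j.cycleRange)⁻¹ 0 = j := by
    rw [Equiv.Perm.inv_eq_iff_eq, Fin.cycleRange_self]
  have hs : ∀ l : Fin d, (j.cycleRange)⁻¹ l.succ = j.succAbove l := by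
    intro l
    rw [Equiv.Perm.inv_eq_iff_eq, Fin.cycleRange_succAbove]
  have hsub : Matrix.of (Fin.cons w (fun l => P (j.succAbove l))) =
      (P.updateRow j w).submatrix ⇑(j.cycleRange)⁻¹ id := by
    ext r k
    refine Fin.cases ?_ (fun l => ?_) r
    · simp [Matrix.submatrix_apply, h0, Matrix.updateRow_self]
    · simp [Matrix.submatrix_apply, hs l, Matrix.updateRow_ne (Fin.succAbove_ne j l),
        Fin.cons_succ]
  rw [hsub, Matrix.det_permute]
  congr 1
  rw [Equiv.Perm.sign_inv, Fin.sign_cycleRange]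
  push_cast
  simp

/-- The value of `phi` on the toric Euler form. -/
lemma phi_toricOmega (n d : ℕ) (e : Fin n → Fin d → ℤ) (I : Fin (d + 1) → Fin n)
    (hinj : Function.Injective I)
    (D : Fin (d + 1) → MvPolynomial (Fin n) ℂ)
    (hD : ∀ k, D k = Matrix.det (Matrix.of fun j' l : Fin d =>
      ((e (I (k.succAbove l)) j' : ℤ) : MvPolynomial (Fin n) ℂ)))
    (w : Fin (d + 1) → MvPolynomial (Fin n) ℂ)
    (hw : ∀ k, w k = (-1) ^ (k : ℕ) * (D k * X (I k))) :
    phi d I w (toricOmega n d e) =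
      (∑ k, w k * w k) * ∏ i ∈ (Finset.image I Finset.univ)ᶜ, X i := by
  classical
  set J₀ : Finset (Fin n) := Finset.image I Finset.univ with hJ₀
  have hmemJ₀ : ∀ k, I k ∈ J₀ := fun k => Finset.mem_image_of_mem I (Finset.mem_univ k)
  have hJ₀card : J₀.card = d + 1 := by
    rw [hJ₀, Finset.card_image_of_injective _ hinj]; simp
  have hψcard : ∀ k : Fin (d + 1), (J₀.erase (I k)).card = d := fun k => by
    rw [Finset.card_erase_of_mem (hmemJ₀ k), hJ₀card]; omega
  set ψ : Fin (d + 1) → {s : Finset (Fin n) // s.card = d} :=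
    fun k => ⟨J₀.erase (I k), hψcard k⟩ with hψ
  have hψinj : Function.Injective ψ := by
    intro a b hab
    have h1 : J₀.erase (I a) = J₀.erase (I b) := Subtype.ext_iff.mp hab
    by_contra hne
    have h2 : I a ∈ J₀.erase (I b) :=
      Finset.mem_erase.mpr ⟨fun h => hne (hinj h), hmemJ₀ a⟩
    rw [← h1] at h2
    exact (Finset.notMem_erase _ _) h2
  have hlist : ∀ s : {s : Finset (Fin n) // s.card = d},
      ((s.1.sort (· ≤ ·)).map (dxF n)).prod =
      (List.ofFn fun m : Fin d => ExteriorAlgebra.ι (MvPolynomial (Fin n) ℂ)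
        (Pi.single ((s.1.orderIsoOfFin s.2 m : Fin n)) 1)).prod := by
    intro s
    congr 1
    refine List.ext_getElem (by simp [s.2]) ?_
    intro i h1 h2
    simp [List.getElem_ofFn, dxF, Finset.coe_orderIsoOfFin_apply, Finset.orderEmbOfFin_apply]
  rw [toricOmega, map_sum]
  rw [Finset.sum_congr rfl (fun s (_ : s ∈ Finset.univ) => by
    rw [map_smul, smul_eq_mul, hlist s, phi_prod])]
  rw [← Finset.sum_subset (Finset.subset_univ (Finset.image ψ Finset.univ)) ?vanish]
  case vanish =>
    intro s _ hs
    -- some element of s is outside J₀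
    have hnot : ¬ s.1 ⊆ J₀ := by
      intro hsub
      have hcards : (J₀ \ s.1).Nonempty := by
        rw [← Finset.card_pos, Finset.card_sdiff_of_subset hsub, hJ₀card, s.2]
        simp
      obtain ⟨a, ha⟩ := hcards
      obtain ⟨haJ, has⟩ := Finset.mem_sdiff.mp ha
      have haJ' := haJ
      rw [hJ₀] at haJ'
      obtain ⟨k, -, rfl⟩ := Finset.mem_image.mp haJ'
      apply hs
      refine Finset.mem_image.mpr ⟨k, Finset.mem_univ k, ?_⟩
      apply Subtype.ext
      exact (Finset.eq_of_subset_of_card_le (Finset.subset_erase.mpr ⟨hsub, has⟩)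
        (by rw [hψcard k, s.2])).symm
    obtain ⟨x, hxs, hxJ⟩ : ∃ x ∈ s.1, x ∉ J₀ := by
      by_contra hc; push_neg at hc; exact hnot hc
    obtain ⟨m0, hm0⟩ : ∃ m : Fin d, ((s.1.orderIsoOfFin s.2) m : Fin n) = x :=
      ⟨(s.1.orderIsoOfFin s.2).symm ⟨x, hxs⟩, by simp⟩
    rw [Amap_apply]
    rw [Matrix.det_eq_zero_of_row_eq_zero m0.succ (fun k => ?_), mul_zero]
    have hne : I k ≠ ((s.1.orderIsoOfFin s.2) m0 : Fin n) := by
      rw [hm0]; rintro rfl; exact hxJ (hmemJ₀ k)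
    simp only [Matrix.of_apply, Fin.cons_succ]
    exact Pi.single_eq_of_ne hne 1
  rw [Finset.sum_image (fun a _ b _ h => hψinj h)]
  rw [Finset.sum_congr rfl (fun k (_ : k ∈ Finset.univ) => ?_), ← Finset.sum_mul]
  -- the main term computation for s = ψ k
  have hgmem : ∀ m : Fin d, (((ψ k).1.orderIsoOfFin (ψ k).2) m : Fin n) ∈ J₀.erase (I k) :=
    fun m => ((ψ k).1.orderIsoOfFin (ψ k).2 m).2
  have hchoice : ∀ m : Fin d, ∃ k', I k' = (((ψ k).1.orderIsoOfFin (ψ k).2) m : Fin n) := by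
    intro m
    have := Finset.mem_of_mem_erase (hgmem m)
    rw [hJ₀] at this
    obtain ⟨k', -, hk'⟩ := Finset.mem_image.mp this
    exact ⟨k', hk'⟩
  choose h hh using hchoice
  have hginj : Function.Injective (fun m => (((ψ k).1.orderIsoOfFin (ψ k).2) m : Fin n)) := by
    intro a b hab
    exact ((ψ k).1.orderIsoOfFin (ψ k).2).injective (Subtype.ext hab)
  have hhinj : Function.Injective h := by
    intro a b hab
    exact hginj (by simp only [← hh a, ← hh b, hab])
  have hne : ∀ m, h m ≠ k := by
    intro m hmk
    have := hh m
    rw [hmk] at this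
    exact (Finset.ne_of_mem_erase (hgmem m)) this.symm
  obtain ⟨σ, hσ⟩ := exists_perm_factor h hhinj k hne
  have hg : ∀ m, (((ψ k).1.orderIsoOfFin (ψ k).2) m : Fin n) = I (k.succAbove (σ m)) := by
    intro m
    rw [← hh m, hσ]
    rfl
  have hdet : Matrix.det (Matrix.of fun j m : Fin d =>
      ((e (((ψ k).1.orderIsoOfFin (ψ k).2 m : Fin n)) j : ℤ) : MvPolynomial (Fin n) ℂ))
      = ((Equiv.Perm.sign σ : ℤ) : MvPolynomial (Fin n) ℂ) * D k := by
    have hmx : (Matrix.of fun j m : Fin d =>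
        ((e (((ψ k).1.orderIsoOfFin (ψ k).2 m : Fin n)) j : ℤ) : MvPolynomial (Fin n) ℂ))
        = (Matrix.of fun j m : Fin d =>
          ((e (I (k.succAbove m)) j : ℤ) : MvPolynomial (Fin n) ℂ)).submatrix id σ := by
      ext j m
      simp only [Matrix.submatrix_apply, Matrix.of_apply, id_eq]
      rw [hg m]
    rw [hmx, Matrix.det_permute', hD k]
  have hAmap : Amap d I w (fun m => Pi.single (((ψ k).1.orderIsoOfFin (ψ k).2 m : Fin n)) 1)
      = ((Equiv.Perm.sign σ : ℤ) : MvPolynomial (Fin n) ℂ) * ((-1) ^ (k : ℕ) * w k) := by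
    have hvs : (fun m => Pi.single (((ψ k).1.orderIsoOfFin (ψ k).2 m : Fin n))
        (1 : MvPolynomial (Fin n) ℂ)) =
        (fun m => Pi.single (I (k.succAbove m)) (1 : MvPolynomial (Fin n) ℂ)) ∘ σ := by
      funext m
      simp only [Function.comp_apply]
      rw [hg m]
    rw [hvs, AlternatingMap.map_perm, Amap_apply]
    have hmx : Matrix.of (Fin.cons w fun l (k' : Fin (d+1)) =>
        (Pi.single (I (k.succAbove l)) 1 : Fin n → MvPolynomial (Fin n) ℂ) (I k'))
        = Matrix.of (Fin.cons w (fun l k' =>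
          if k.succAbove l = k' then (1 : MvPolynomial (Fin n) ℂ) else 0)) := by
      ext r k'
      refine Fin.cases ?_ (fun l => ?_) r
      · simp
      · simp [Fin.cons_succ, Pi.single_apply, hinj.eq_iff, eq_comm]
    rw [hmx, det_cons_succAbove, Units.smul_def, zsmul_eq_mul]
  have hcompl : (∏ i ∈ ((ψ k).1)ᶜ, (X i : MvPolynomial (Fin n) ℂ))
      = X (I k) * ∏ i ∈ J₀ᶜ, (X i : MvPolynomial (Fin n) ℂ) := by
    have h1 : ((ψ k).1)ᶜ = insert (I k) J₀ᶜ := by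
      show (J₀.erase (I k))ᶜ = insert (I k) J₀ᶜ
      rw [Finset.compl_erase]
    rw [h1, Finset.prod_insert (by simp [hmemJ₀ k])]
  rw [hdet, hAmap, hcompl]
  rcases Int.units_eq_one_or (Equiv.Perm.sign σ) with h1 | h1 <;>
    rw [h1] <;> push_cast <;> rw [hw k] <;> ring

end ToricJacAux

/-- Determinant formula for the toric Jacobian: if
`∑_j (-1)^j F_j dF_0 ∧ ⋯ ∧ \widehat{dF_j} ∧ ⋯ ∧ dF_d = J_F Ω` and each `F_j`
satisfies the Euler formula
`c_I^β F_j = ∑_k (-1)^k det(e_{I∖{i_k}}) x_{i_k} ∂F_j/∂x_{i_k}` with `c_I^β ≠ 0`,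
then `J_F · c_I^β · x̂_I = det(∂F_j/∂x_{i_k})`. -/
theorem toric_jacobian_det_formula (d : ℕ)
    (e : Fin n → Fin d → ℤ) (b : Fin n → ℤ)
    (F : Fin (d + 1) → MvPolynomial (Fin n) ℂ)
    (I : Fin (d + 1) → Fin n) (hinj : Function.Injective I)
    (hcI : cBeta n d e b I ≠ 0)
    (heuler : ∀ j : Fin (d + 1),
      ((cBeta n d e b I : ℤ) : MvPolynomial (Fin n) ℂ) * F j =
        ∑ k : Fin (d + 1), (-1 : MvPolynomial (Fin n) ℂ) ^ (k : ℕ) *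
          ((Matrix.det (Matrix.of fun j' l : Fin d =>
              e (I (k.succAbove l)) j') : MvPolynomial (Fin n) ℂ) *
            (X (I k) * pderiv (I k) (F j))))
    (JF : MvPolynomial (Fin n) ℂ)
    (hJ : ∑ j : Fin (d + 1),
        ((-1 : MvPolynomial (Fin n) ℂ) ^ (j : ℕ) * F j) •
          (List.ofFn fun k : Fin d => dPoly n (F (j.succAbove k))).prod =
      JF • toricOmega n d e) :
    JF * ((cBeta n d e b I : ℤ) : MvPolynomial (Fin n) ℂ) *
        ∏ i ∈ (Finset.image I Finset.univ)ᶜ, X i =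
      Matrix.det (Matrix.of fun j k : Fin (d + 1) => pderiv (I k) (F j)) := by

  classical
  set c : MvPolynomial (Fin n) ℂ := ((cBeta n d e b I : ℤ) : MvPolynomial (Fin n) ℂ) with hc
  set D : Fin (d + 1) → MvPolynomial (Fin n) ℂ := fun k =>
    Matrix.det (Matrix.of fun j' l : Fin d =>
      ((e (I (k.succAbove l)) j' : ℤ) : MvPolynomial (Fin n) ℂ)) with hD
  set w : Fin (d + 1) → MvPolynomial (Fin n) ℂ :=
    fun k => (-1) ^ (k : ℕ) * (D k * X (I k)) with hw
  set P : Matrix (Fin (d + 1)) (Fin (d + 1)) (MvPolynomial (Fin n) ℂ) :=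
    Matrix.of fun j k => pderiv (I k) (F j) with hP
  -- Euler formula in matrix form
  have hPw : ∀ j, c * F j = ∑ k, P j k * w k := by
    intro j
    rw [heuler j]
    refine Finset.sum_congr rfl fun k _ => ?_
    simp only [hw, hP, hD, Matrix.of_apply]
    ring
  -- the functional applied to each term of the LHS
  have hL : ∀ j : Fin (d + 1),
      (ToricJacAux.phi d I w) (((-1 : MvPolynomial (Fin n) ℂ) ^ (j : ℕ) * F j) •
        (List.ofFn fun k : Fin d => dPoly n (F (j.succAbove k))).prod)
      = F j * Matrix.cramer P.transpose w j := by
    intro j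
    rw [map_smul, smul_eq_mul]
    have h1 : (ToricJacAux.phi d I w)
        ((List.ofFn fun k : Fin d => dPoly n (F (j.succAbove k))).prod)
        = ToricJacAux.Amap d I w (fun k i => pderiv i (F (j.succAbove k))) :=
      ToricJacAux.phi_prod d I w _
    have h2 : ToricJacAux.Amap d I w (fun k i => pderiv i (F (j.succAbove k)))
        = Matrix.det (Matrix.of (Fin.cons w (fun l => P (j.succAbove l)))) := by
      rw [ToricJacAux.Amap_apply]
      rfl
    rw [h1, h2, ToricJacAux.det_cons_eq_updateRow, ← Matrix.cramer_transpose_apply]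
    have hsq : ((-1 : MvPolynomial (Fin n) ℂ) ^ (j : ℕ)) * ((-1) ^ (j : ℕ)) = 1 := by
      rw [← pow_add]
      exact Even.neg_one_pow ⟨(j : ℕ), rfl⟩
    linear_combination (F j * Matrix.cramer P.transpose w j) * hsq
  -- apply the functional to the defining identity
  have key := congrArg (ToricJacAux.phi d I w) hJ
  rw [map_sum, map_smul, smul_eq_mul] at key
  rw [Finset.sum_congr rfl (fun j _ => hL j)] at key
  rw [ToricJacAux.phi_toricOmega n d e I hinj D (fun k => by simp only [hD]) w
    (fun k => by simp only [hw])] at key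
  -- nonvanishing of the auxiliary factor
  have hDZ : ∃ k₀ : Fin (d + 1),
      Matrix.det (Matrix.of fun j' l : Fin d => e (I (k₀.succAbove l)) j') ≠ 0 := by
    by_contra hcon
    push_neg at hcon
    apply hcI
    rw [cBeta, Matrix.det_succ_row_zero]
    refine Finset.sum_eq_zero fun j _ => ?_
    have hsub : (Matrix.of fun r c : Fin (d + 1) =>
        Fin.cases (b (I c)) (fun j : Fin d => e (I c) j) r).submatrix Fin.succ j.succAbove
        = Matrix.of fun j' l : Fin d => e (I (j.succAbove l)) j' := by
      ext r c'
      simp [Matrix.submatrix_apply]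
    rw [hsub, hcon j, mul_zero]
  obtain ⟨k₀, hk₀⟩ := hDZ
  have hDcast : ∀ k, D k = ((Matrix.det (Matrix.of fun j' l : Fin d =>
      e (I (k.succAbove l)) j') : ℤ) : MvPolynomial (Fin n) ℂ) := by
    intro k
    have h := RingHom.map_det (Int.castRingHom (MvPolynomial (Fin n) ℂ))
      (Matrix.of fun j' l : Fin d => e (I (k.succAbove l)) j')
    simp only [hD]
    calc Matrix.det (Matrix.of fun j' l : Fin d =>
          ((e (I (k.succAbove l)) j' : ℤ) : MvPolynomial (Fin n) ℂ))
        = ((Matrix.of fun j' l : Fin d => e (I (k.succAbove l)) j').map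
            (Int.castRingHom (MvPolynomial (Fin n) ℂ))).det := by
          congr 1
      _ = _ := by
          rw [RingHom.mapMatrix_apply] at h
          rw [← h]
          rfl
  have hSne : (∑ k, w k * w k) ≠ 0 := by
    intro h0
    have hev := congrArg (eval (fun i : Fin n => if i = I k₀ then (1 : ℂ) else 0)) h0
    rw [map_zero, map_sum] at hev
    rw [Fintype.sum_eq_single k₀ (fun k hk => ?_)] at hev
    · simp only [hw, hDcast, map_mul, map_pow, map_neg, map_one, eval_X, map_intCast,
        if_pos rfl, mul_one] at hev
      have hz : ((Matrix.det (Matrix.of fun j' l : Fin d =>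
          e (I (k₀.succAbove l)) j') : ℤ) : ℂ) = 0 := by
        have h2 := mul_self_eq_zero.mp hev
        rcases mul_eq_zero.mp h2 with h3 | h3
        · exact absurd h3 (by simp [pow_ne_zero])
        · simpa using h3
      exact hk₀ (by exact_mod_cast hz)
    · have hne : I k ≠ I k₀ := fun hh => hk (hinj hh)
      simp only [hw, hDcast, map_mul, map_pow, map_neg, map_one, eval_X, map_intCast,
        if_neg hne]
      ring
  -- the main algebraic computation
  have hmain : P.det * (∑ k, w k * w k) =
      c * (JF * ((∑ k, w k * w k) * ∏ i ∈ (Finset.image I Finset.univ)ᶜ, X i)) := by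
    calc P.det * (∑ k, w k * w k)
        = ∑ k, w k * ((P.transpose.det • w) k) := by
          rw [Matrix.det_transpose, Finset.mul_sum]
          refine Finset.sum_congr rfl fun k _ => ?_
          simp only [Pi.smul_apply, smul_eq_mul]
          ring
      _ = ∑ k, w k * ((P.transpose.mulVec (Matrix.cramer P.transpose w)) k) := by
          rw [Matrix.mulVec_cramer]
      _ = ∑ j, (∑ k, P j k * w k) * Matrix.cramer P.transpose w j := by
          simp only [Matrix.mulVec, dotProduct, Matrix.transpose_apply,
            Finset.mul_sum, Finset.sum_mul]
          rw [Finset.sum_comm]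
          exact Finset.sum_congr rfl fun j _ => Finset.sum_congr rfl fun k _ => by ring
      _ = ∑ j, (c * F j) * Matrix.cramer P.transpose w j :=
          Finset.sum_congr rfl fun j _ => by rw [← hPw j]
      _ = c * ∑ j, F j * Matrix.cramer P.transpose w j := by
          rw [Finset.mul_sum]
          exact Finset.sum_congr rfl fun j _ => by ring
      _ = _ := by rw [key]
  have hfin : (JF * c * ∏ i ∈ (Finset.image I Finset.univ)ᶜ, X i) * (∑ k, w k * w k)
      = P.det * (∑ k, w k * w k) := by
    rw [hmain]
    ring
  exact mul_right_cancel₀ hSne hfin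


end
end

section
/- Let $\Sigma$ be a complete fan in $\mathbb{R}^d$ ($d\ge 1$) and for each $(d-1)$-dimensional cone $\tau\in\Sigma$ let $\ell_\tau = \tau^\perp$ be the corresponding line in the dual space $(\mathbb{R}^d)^*$. Then the lines $\ell_\tau$, as $\tau$ ranges over all $(d-1)$-cones of $\Sigma$, span $(\mathbb{R}^d)^*$; equivalently, they cannot all lie in a common hyperplane. -/
/-- A polyhedral cone in `ℝ^d`: the set of nonnegative combinations of finitely
many vectors. -/
def IsPolyhedralCone (d : ℕ) (C : Set (Fin d → ℝ)) : Prop :=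
  ∃ (k : ℕ) (v : Fin k → (Fin d → ℝ)),
    C = {x | ∃ c : Fin k → ℝ, (∀ i, 0 ≤ c i) ∧ x = ∑ i, c i • v i}

/-- `F` is a face of the cone `C`: the zero locus on `C` of a linear functional
that is nonnegative on `C`. -/
def IsFaceOfCone (d : ℕ) (F C : Set (Fin d → ℝ)) : Prop :=
  ∃ ℓ : (Fin d → ℝ) →ₗ[ℝ] ℝ, (∀ x ∈ C, 0 ≤ ℓ x) ∧ F = {x ∈ C | ℓ x = 0}

/-- A fan in `ℝ^d`: a finite collection of strongly convex polyhedral cones,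
closed under taking faces, such that the intersection of any two cones is a face
of each. -/
def IsFan (d : ℕ) (S : Set (Set (Fin d → ℝ))) : Prop :=
  S.Finite ∧
  (∀ C ∈ S, IsPolyhedralCone d C) ∧
  (∀ C ∈ S, ∀ x ∈ C, -x ∈ C → x = 0) ∧
  (∀ C ∈ S, ∀ F, IsFaceOfCone d F C → F ∈ S) ∧
  (∀ C ∈ S, ∀ C' ∈ S, IsFaceOfCone d (C ∩ C') C ∧ IsFaceOfCone d (C ∩ C') C')

/-- The dimension of a cone: the rank of its linear span. -/
noncomputable def coneDim (d : ℕ) (C : Set (Fin d → ℝ)) : ℕ :=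
  Module.finrank ℝ (Submodule.span ℝ C)

/-- Conical Carathéodory: any nonneg combination can be rewritten with linearly
independent support. -/
lemma cone_caratheodory {d k : ℕ} (v : Fin k → (Fin d → ℝ)) :
    ∀ (n : ℕ) (c : Fin k → ℝ), (∀ i, 0 ≤ c i) →
      (Finset.univ.filter (fun i => c i ≠ 0)).card ≤ n →
      ∃ (s : Finset (Fin k)) (c' : Fin k → ℝ), (∀ i, 0 ≤ c' i) ∧ (∀ i ∉ s, c' i = 0) ∧
        ∑ i, c' i • v i = ∑ i, c i • v i ∧ LinearIndependent ℝ (fun i : s => v (i : Fin k)) := by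
  intro n
  induction n with
  | zero =>
    intro c hc hcard
    have hsupp : ∀ i, c i = 0 := by
      intro i
      by_contra h
      have hm : i ∈ Finset.univ.filter (fun i => c i ≠ 0) := by simp [h]
      have := Finset.card_pos.mpr ⟨i, hm⟩
      omega
    refine ⟨∅, c, hc, fun i _ => hsupp i, rfl, ?_⟩
    have : IsEmpty ((∅ : Finset (Fin k)) : Set (Fin k)) := by simp
    exact linearIndependent_empty_type
  | succ n ih =>
    intro c hc hcard
    set s₀ : Finset (Fin k) := Finset.univ.filter (fun i => c i ≠ 0) with hs₀
    by_cases hLI : LinearIndependent ℝ (fun i : s₀ => v (i : Fin k))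
    · refine ⟨s₀, c, hc, fun i hi => ?_, rfl, hLI⟩
      by_contra h
      exact hi (by simp [hs₀, h])
    · obtain ⟨g, hgsum, ⟨i₀', hgi₀'⟩⟩ := Fintype.not_linearIndependent_iff.mp hLI
      set G : Fin k → ℝ := fun i => if h : i ∈ s₀ then g ⟨i, h⟩ else 0 with hG
      have hGsupp : ∀ i, G i ≠ 0 → i ∈ s₀ := by
        intro i hi
        by_contra h
        exact hi (by simp [hG, dif_neg h])
      have hGsum : ∑ i, G i • v i = 0 := by
        rw [← Finset.sum_subset (Finset.subset_univ s₀)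
          (fun i _ hi => by simp [hG, dif_neg hi])]
        rw [← Finset.sum_coe_sort s₀ (fun i => G i • v i)]
        rw [← hgsum]
        exact Finset.sum_congr rfl (fun i _ => by simp [hG, dif_pos i.2])
      -- WLOG there is a positive entry
      have hex : ∃ H : Fin k → ℝ, (∑ i, H i • v i = 0) ∧ (∀ i, H i ≠ 0 → i ∈ s₀) ∧
          ∃ i, 0 < H i := by
        rcases lt_trichotomy (G i₀') 0 with h | h | h
        · refine ⟨-G, by simp [hGsum], fun i hi => hGsupp i (by simpa using hi), i₀', by
            simpa using h⟩
        · exact absurd (by simp [hG, dif_pos i₀'.2] at h ⊢; exact h) (by simpa using hgi₀')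
        · exact ⟨G, hGsum, hGsupp, i₀', h⟩
      obtain ⟨H, hHsum, hHsupp, i₁, hi₁⟩ := hex
      set P : Finset (Fin k) := Finset.univ.filter (fun i => 0 < H i) with hP
      have hPne : P.Nonempty := ⟨i₁, by simp [hP, hi₁]⟩
      obtain ⟨i₀, hi₀P, hi₀min⟩ := Finset.exists_min_image P (fun i => c i / H i) hPne
      have hHi₀ : 0 < H i₀ := by simpa [hP] using hi₀P
      set t : ℝ := c i₀ / H i₀ with ht
      have ht0 : 0 ≤ t := div_nonneg (hc i₀) hHi₀.le
      set c'' : Fin k → ℝ := fun i => c i - t * H i with hc''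
      have hc''nonneg : ∀ i, 0 ≤ c'' i := by
        intro i
        rcases le_or_gt (H i) 0 with h | h
        · have : t * H i ≤ 0 := mul_nonpos_of_nonneg_of_nonpos ht0 h
          simp only [hc'']
          linarith [hc i]
        · have hmin := hi₀min i (by simp [hP, h])
          rw [div_le_div_iff₀ hHi₀ h] at hmin
          have hle : t * H i ≤ c i := by
            rw [ht, div_mul_eq_mul_div, div_le_iff₀ hHi₀]
            linarith
          simp only [hc'']
          linarith
      have hc''sum : ∑ i, c'' i • v i = ∑ i, c i • v i := by
        simp only [hc'', sub_smul, Finset.sum_sub_distrib]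
        have : ∑ i, (t * H i) • v i = t • ∑ i, H i • v i := by
          rw [Finset.smul_sum]
          exact Finset.sum_congr rfl (fun i _ => by rw [smul_smul])
        rw [this, hHsum, smul_zero, sub_zero]
      have hi₀s₀ : i₀ ∈ s₀ := hHsupp i₀ hHi₀.ne'
      have hsubset : Finset.univ.filter (fun i => c'' i ≠ 0) ⊆ s₀.erase i₀ := by
        intro i hi
        simp only [Finset.mem_filter, Finset.mem_univ, true_and] at hi
        rcases eq_or_ne i i₀ with rfl | hne
        · exact absurd (by simp [hc'', ht, div_mul_cancel₀ _ hHi₀.ne']) hi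
        · refine Finset.mem_erase.mpr ⟨hne, ?_⟩
          by_contra h
          have hci : c i = 0 := by
            by_contra h'
            exact h (by simp [hs₀, h'])
          have hHi : H i = 0 := by
            by_contra h'
            exact h (hHsupp i h')
          exact hi (by simp [hc'', hci, hHi])
      have hcard'' : (Finset.univ.filter (fun i => c'' i ≠ 0)).card ≤ n := by
        have h1 := Finset.card_le_card hsubset
        have h2 : (s₀.erase i₀).card = s₀.card - 1 := Finset.card_erase_of_mem hi₀s₀
        have h3 : 1 ≤ s₀.card := Finset.card_pos.mpr ⟨i₀, hi₀s₀⟩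
        omega
      obtain ⟨s, c', h1, h2, h3, h4⟩ := ih c'' hc''nonneg hcard''
      exact ⟨s, c', h1, h2, h3.trans hc''sum, h4⟩

lemma IsPolyhedralCone.isClosed {d : ℕ} {C : Set (Fin d → ℝ)}
    (h : IsPolyhedralCone d C) : IsClosed C := by
  obtain ⟨k, v, rfl⟩ := h
  have hdecomp : {x | ∃ c : Fin k → ℝ, (∀ i, 0 ≤ c i) ∧ x = ∑ i, c i • v i} =
      ⋃ (s : Finset (Fin k)) (_ : LinearIndependent ℝ (fun i : s => v (i : Fin k))),
        {x | ∃ c : Fin k → ℝ, (∀ i, 0 ≤ c i) ∧ (∀ i ∉ s, c i = 0) ∧ x = ∑ i, c i • v i} := by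
    ext x
    simp only [Set.mem_setOf_eq, Set.mem_iUnion]
    constructor
    · rintro ⟨c, hc, rfl⟩
      obtain ⟨s, c', h1, h2, h3, h4⟩ := cone_caratheodory v
        ((Finset.univ.filter (fun i => c i ≠ 0)).card) c hc le_rfl
      exact ⟨s, h4, c', h1, h2, h3.symm⟩
    · rintro ⟨s, _, c, hc, _, rfl⟩
      exact ⟨c, hc, rfl⟩
  rw [hdecomp]
  refine isClosed_iUnion_of_finite (fun s => isClosed_iUnion_of_finite (fun hs => ?_))
  -- the cone over a linearly independent subfamily is closed
  set f : ({i // i ∈ s} → ℝ) →ₗ[ℝ] (Fin d → ℝ) :=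
    { toFun := fun c => ∑ i : s, c i • v (i : Fin k)
      map_add' := by
        intro a b
        simp [add_smul, Finset.sum_add_distrib]
      map_smul' := by
        intro r a
        simp [Finset.smul_sum, smul_smul] } with hf
  have hker : LinearMap.ker f = ⊥ := by
    rw [LinearMap.ker_eq_bot']
    intro c hc
    have := Fintype.linearIndependent_iff.mp hs c hc
    funext i
    exact this i
  have hclosedemb : Topology.IsClosedEmbedding f := f.isClosedEmbedding_of_injective hker
  have horth : IsClosed {c : {i // i ∈ s} → ℝ | ∀ i, 0 ≤ c i} := by
    have : {c : {i // i ∈ s} → ℝ | ∀ i, 0 ≤ c i} =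
        ⋂ i, {c : {i // i ∈ s} → ℝ | 0 ≤ c i} := by
      ext c; simp
    rw [this]
    exact isClosed_iInter (fun i => isClosed_le continuous_const (continuous_apply i))
  have himg : {x | ∃ c : Fin k → ℝ, (∀ i, 0 ≤ c i) ∧ (∀ i ∉ s, c i = 0) ∧ x = ∑ i, c i • v i} =
      f '' {c | ∀ i, 0 ≤ c i} := by
    ext x
    simp only [Set.mem_setOf_eq, Set.mem_image, hf, LinearMap.coe_mk, AddHom.coe_mk]
    constructor
    · rintro ⟨c, hc, hsupp, rfl⟩
      refine ⟨fun i => c i, fun i => hc i, ?_⟩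
      rw [show (∑ i : Fin k, c i • v i) = ∑ i ∈ s, c i • v i from
        (Finset.sum_subset (Finset.subset_univ s)
          (fun i _ hi => by rw [hsupp i hi, zero_smul])).symm]
      exact Finset.sum_coe_sort s (fun i => c i • v i)
    · rintro ⟨c, hc, rfl⟩
      refine ⟨fun i => if h : i ∈ s then c ⟨i, h⟩ else 0, fun i => ?_, fun i hi => dif_neg hi, ?_⟩
      · by_cases h : i ∈ s
        · simpa [dif_pos h] using hc ⟨i, h⟩
        · simp [dif_neg h]
      · rw [← Finset.sum_subset (Finset.subset_univ s)
          (fun i _ hi => show (if h : i ∈ s then c ⟨i, h⟩ else 0) • v i = 0 by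
            rw [dif_neg hi, zero_smul])]
        rw [← Finset.sum_coe_sort s
          (fun i => (if h : i ∈ s then c ⟨i, h⟩ else 0) • v i)]
        exact (Finset.sum_congr rfl (fun i _ => by simp only [dif_pos i.2])).symm
  rw [himg]
  exact hclosedemb.isClosedMap _ horth

lemma IsPolyhedralCone.smul_mem {d : ℕ} {C : Set (Fin d → ℝ)}
    (h : IsPolyhedralCone d C) {r : ℝ} (hr : 0 ≤ r) {x : Fin d → ℝ} (hx : x ∈ C) :
    r • x ∈ C := by
  obtain ⟨k, v, rfl⟩ := h
  obtain ⟨c, hc, rfl⟩ := hx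
  refine ⟨fun i => r * c i, fun i => mul_nonneg hr (hc i), ?_⟩
  rw [Finset.smul_sum]
  exact Finset.sum_congr rfl (fun i _ => by rw [smul_smul])

/-- Key lemma: if the line `p + ℝv` avoids all cones of dimension `< d`, then any
cone of the fan containing `p` contains `v`. -/
lemma ray_mem_of_line_avoids (d : ℕ) (S : Set (Set (Fin d → ℝ))) (hS : IsFan d S)
    (hcomplete : ⋃₀ S = Set.univ) (p v : Fin d → ℝ)
    (hp : ∀ C ∈ S, coneDim d C < d → ∀ t : ℝ, p + t • v ∉ C)
    (σ0 : Set (Fin d → ℝ)) (hσ0 : σ0 ∈ S) (hpσ0 : p ∈ σ0) :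
    v ∈ σ0 := by
  obtain ⟨hfin, hpoly, hstrong, hfaces, hinter⟩ := hS
  have hclosed : ∀ C ∈ S, IsClosed C := fun C hC => (hpoly C hC).isClosed
  set Tset : Set ℝ := {t : ℝ | p + t • v ∈ σ0} with hTset
  have h0 : (0 : ℝ) ∈ Tset := by simp [hTset, hpσ0]
  have hTclosed : IsClosed Tset := by
    have : Tset = (fun t : ℝ => p + t • v) ⁻¹' σ0 := rfl
    rw [this]
    exact (hclosed σ0 hσ0).preimage (by continuity)
  have key : ¬ BddAbove Tset := by
    intro hbdd
    set tstar : ℝ := sSup Tset with htstar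
    have htstarmem : tstar ∈ Tset := hTclosed.csSup_mem ⟨0, h0⟩ hbdd
    -- points slightly beyond tstar
    set q : ℕ → (Fin d → ℝ) := fun n => p + (tstar + 1 / (n + 1)) • v with hq
    have hqS : ∀ n : ℕ, ∃ C ∈ S, q n ∈ C := by
      intro n
      have : q n ∈ ⋃₀ S := hcomplete ▸ Set.mem_univ _
      exact this
    choose Cn hCn hqCn using hqS
    haveI : Finite ↥S := hfin.to_subtype
    obtain ⟨σ1s, hfib⟩ := Finite.exists_infinite_fiber (fun n => (⟨Cn n, hCn n⟩ : ↥S))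
    set σ1 : Set (Fin d → ℝ) := σ1s.1 with hσ1def
    have hσ1 : σ1 ∈ S := σ1s.2
    have hAinf : Set.Infinite {n : ℕ | Cn n = σ1} := by
      rw [← Set.infinite_coe_iff]
      refine Set.infinite_coe_iff.mpr (Set.Infinite.mono ?_ (Set.infinite_coe_iff.mp hfib))
      intro n hn
      simp only [Set.mem_preimage, Set.mem_singleton_iff] at hn
      simpa [hσ1def] using congrArg Subtype.val hn
    have hqσ1 : ∀ n ∈ {n : ℕ | Cn n = σ1}, q n ∈ σ1 := by
      intro n hn
      rw [← hn]; exact hqCn n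
    -- tstar point is in σ1 (closure argument)
    have hx1 : p + tstar • v ∈ σ1 := by
      rw [← (hclosed σ1 hσ1).closure_eq]
      rw [Metric.mem_closure_iff]
      intro ε hε
      obtain ⟨N, hN⟩ := exists_nat_gt (‖v‖ / ε)
      obtain ⟨n, hnA, hnN⟩ := hAinf.exists_gt N
      refine ⟨q n, hqσ1 n hnA, ?_⟩
      have : p + tstar • v - q n = -((1 / (n + 1 : ℝ)) • v) := by
        simp only [hq, add_smul]
        abel
      rw [dist_eq_norm, this, norm_neg, norm_smul]
      have hn1 : (0 : ℝ) < n + 1 := by positivity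
      have : ‖(1 / (n + 1 : ℝ))‖ = 1 / (n + 1 : ℝ) := by
        rw [Real.norm_eq_abs, abs_of_pos (by positivity)]
      rw [this]
      rw [div_mul_eq_mul_div, one_mul, div_lt_iff₀ hn1]
      have hNn : (N : ℝ) < n := by exact_mod_cast hnN
      have : ‖v‖ / ε < n + 1 := by linarith [hN]
      rw [div_lt_iff₀ hε] at this
      linarith [mul_pos hε hn1]
    -- σ1 contains a point not in σ0
    obtain ⟨n₀, hn₀A⟩ := hAinf.nonempty
    have hqn₀σ1 : q n₀ ∈ σ1 := hqσ1 n₀ hn₀A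
    have hqn₀σ0 : q n₀ ∉ σ0 := by
      intro hmem
      have : tstar + 1 / (n₀ + 1 : ℝ) ∈ Tset := hmem
      have hle := le_csSup hbdd this
      have : (0 : ℝ) < 1 / (n₀ + 1 : ℝ) := by positivity
      linarith
    -- the face σ1 ∩ σ0
    obtain ⟨hface, -⟩ := hinter σ1 hσ1 σ0 hσ0
    have hFS : σ1 ∩ σ0 ∈ S := hfaces σ1 hσ1 _ hface
    obtain ⟨ℓ, hℓpos, hℓeq⟩ := hface
    have hℓqn₀ : ℓ (q n₀) ≠ 0 := by
      intro h
      have : q n₀ ∈ σ1 ∩ σ0 := by rw [hℓeq]; exact ⟨hqn₀σ1, h⟩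
      exact hqn₀σ0 this.2
    have hdimF : coneDim d (σ1 ∩ σ0) < d := by
      have hsub : σ1 ∩ σ0 ⊆ (LinearMap.ker ℓ : Set (Fin d → ℝ)) := by
        intro x hx
        rw [hℓeq] at hx
        exact hx.2
      have hker : LinearMap.ker ℓ ≠ ⊤ := by
        intro h
        exact hℓqn₀ (h ▸ Submodule.mem_top : q n₀ ∈ LinearMap.ker ℓ)
      have h1 : Submodule.span ℝ (σ1 ∩ σ0) ≤ LinearMap.ker ℓ :=
        Submodule.span_le.mpr hsub
      have h2 := Submodule.finrank_mono h1
      have h3 : Module.finrank ℝ (LinearMap.ker ℓ) < Module.finrank ℝ (Fin d → ℝ) :=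
        Submodule.finrank_lt hker
      rw [Module.finrank_fin_fun] at h3
      calc coneDim d (σ1 ∩ σ0) ≤ Module.finrank ℝ (LinearMap.ker ℓ) := h2
        _ < d := h3
    exact hp _ hFS hdimF tstar ⟨hx1, htstarmem⟩
  -- unbounded above: extract a sequence tending to infinity
  rw [not_bddAbove_iff] at key
  have hseq : ∀ n : ℕ, ∃ t : ℝ, t ∈ Tset ∧ (n : ℝ) < t := by
    intro n
    obtain ⟨t, ht, hgt⟩ := key n
    exact ⟨t, ht, hgt⟩
  choose t ht htgt using hseq
  have htpos : ∀ n, 0 < t n := fun n => lt_of_le_of_lt (Nat.cast_nonneg n) (htgt n)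
  have hmem : ∀ n : ℕ, (t n)⁻¹ • p + v ∈ σ0 := by
    intro n
    have h1 : (t n)⁻¹ • (p + t n • v) ∈ σ0 :=
      (hpoly σ0 hσ0).smul_mem (inv_nonneg.mpr (htpos n).le) (ht n)
    have h2 : (t n)⁻¹ • (p + t n • v) = (t n)⁻¹ • p + v := by
      rw [smul_add, smul_smul, inv_mul_cancel₀ (htpos n).ne', one_smul]
    rwa [h2] at h1
  have hlim : Filter.Tendsto (fun n : ℕ => (t n)⁻¹ • p + v) Filter.atTop (nhds v) := by
    have h1 : Filter.Tendsto t Filter.atTop Filter.atTop :=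
      Filter.tendsto_atTop_mono (fun n => (htgt n).le) tendsto_natCast_atTop_atTop
    have h2 : Filter.Tendsto (fun n => (t n)⁻¹) Filter.atTop (nhds 0) :=
      Filter.Tendsto.inv_tendsto_atTop h1
    have h3 : Filter.Tendsto (fun n : ℕ => (t n)⁻¹ • p) Filter.atTop (nhds ((0 : ℝ) • p)) :=
      h2.smul_const p
    rw [zero_smul] at h3
    simpa using h3.add_const v
  exact (hclosed σ0 hσ0).mem_of_tendsto hlim (Filter.Eventually.of_forall hmem)

/-- Representation of a linear functional on `Fin d → ℝ` via its coefficient vector. -/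
lemma dual_rep {d : ℕ} (f : (Fin d → ℝ) →ₗ[ℝ] ℝ) (x : Fin d → ℝ) :
    f x = ∑ i, x i * (fun i => f (fun j => if i = j then 1 else 0)) i := by
  conv_lhs => rw [LinearMap.pi_apply_eq_sum_univ f x]
  exact Finset.sum_congr rfl (fun i _ => smul_eq_mul _ _)

/-- For a complete fan `Σ` in `ℝ^d` (`d ≥ 1`), the lines `ℓ_τ = τ^⊥` in the dual
space, as `τ` ranges over the `(d-1)`-dimensional cones of `Σ`, span the dual
space; equivalently they cannot all lie in a common hyperplane. -/
theorem perp_lines_of_facets_span (d : ℕ) (hd : 1 ≤ d)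
    (S : Set (Set (Fin d → ℝ))) (hS : IsFan d S) (hcomplete : ⋃₀ S = Set.univ) :
    Submodule.span ℝ
      {m : Fin d → ℝ | ∃ τ ∈ S, coneDim d τ = d - 1 ∧ ∀ x ∈ τ, ∑ i, m i * x i = 0}
      = ⊤ := by
  by_contra hne
  set M := {m : Fin d → ℝ | ∃ τ ∈ S, coneDim d τ = d - 1 ∧ ∀ x ∈ τ, ∑ i, m i * x i = 0}
    with hM
  obtain ⟨f, hf0, hfmap⟩ :=
    Submodule.exists_dual_map_eq_bot_of_lt_top (lt_top_iff_ne_top.mpr hne) inferInstance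
  set v : Fin d → ℝ := fun i => f (fun j => if i = j then 1 else 0) with hv
  have hfx : ∀ x : Fin d → ℝ, f x = ∑ i, x i * v i := fun x => dual_rep f x
  have hv0 : v ≠ 0 := by
    intro h
    apply hf0
    apply LinearMap.ext
    intro x
    rw [hfx x, h]
    simp
  have hvM : ∀ m ∈ M, ∑ i, m i * v i = 0 := by
    intro m hm
    have h1 : f m ∈ (Submodule.span ℝ M).map f := 
      Submodule.mem_map_of_mem (Submodule.subset_span hm)
    rw [hfmap] at h1
    rw [← hfx m]
    simpa using h1
  -- Step 1: v lies in the span of every (d-1)-dimensional cone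
  have hstep1 : ∀ τ ∈ S, coneDim d τ = d - 1 → v ∈ Submodule.span ℝ τ := by
    intro τ hτ hdim
    by_contra hvn
    obtain ⟨g, hgv, hgmap⟩ := Submodule.exists_dual_map_eq_bot_of_notMem hvn inferInstance
    set m : Fin d → ℝ := fun i => g (fun j => if i = j then 1 else 0) with hm'
    have hgx : ∀ x : Fin d → ℝ, g x = ∑ i, x i * m i := fun x => dual_rep g x
    have hmM : m ∈ M := by
      refine ⟨τ, hτ, hdim, fun x hx => ?_⟩
      have h1 : g x ∈ (Submodule.span ℝ τ).map g :=
        Submodule.mem_map_of_mem (Submodule.subset_span hx)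
      rw [hgmap] at h1
      have h2 : g x = 0 := by simpa using h1
      rw [hgx x] at h2
      rw [← h2]
      exact Finset.sum_congr rfl (fun i _ => mul_comm _ _)
    have h3 := hvM m hmM
    apply hgv
    rw [hgx v]
    rw [← h3]
    exact Finset.sum_congr rfl (fun i _ => mul_comm _ _)
  -- Step 2: for each small cone, a proper subspace containing it and v
  have hU : ∀ C ∈ S, coneDim d C < d → ∃ U : Submodule ℝ (Fin d → ℝ),
      U ≠ ⊤ ∧ C ⊆ U ∧ v ∈ U := by
    intro C hC hdim
    refine ⟨Submodule.span ℝ C ⊔ Submodule.span ℝ {v}, ?_, 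
      fun x hx => Submodule.mem_sup_left (Submodule.subset_span hx),
      Submodule.mem_sup_right (Submodule.mem_span_singleton_self v)⟩
    have hfr : Module.finrank ℝ ↥(Submodule.span ℝ C ⊔ Submodule.span ℝ {v}) < d := by
      rcases eq_or_ne (coneDim d C) (d - 1) with heq | hne'
      · have hvC : Submodule.span ℝ {v} ≤ Submodule.span ℝ C := by
          rw [Submodule.span_singleton_le_iff_mem]
          exact hstep1 C hC heq
        rw [sup_eq_left.mpr hvC]
        rw [coneDim] at heq
        omega
      · have h1 := Submodule.finrank_sup_add_finrank_inf_eq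
          (Submodule.span ℝ C) (Submodule.span ℝ {v})
        have h2 : Module.finrank ℝ ↥(Submodule.span ℝ {v}) ≤ 1 :=
          finrank_span_le_card ({v} : Set (Fin d → ℝ)) |>.trans (by simp)
        rw [coneDim] at hdim hne'
        omega
    intro h
    rw [h] at hfr
    rw [finrank_top, Module.finrank_fin_fun] at hfr
    omega
  -- Step 3: choose p avoiding all these proper subspaces
  set T : Set (Set (Fin d → ℝ)) := {C | C ∈ S ∧ coneDim d C < d} with hT
  have hTfin : T.Finite := hS.1.subset (fun C hC => hC.1)
  haveI : Finite ↥T := hTfin.to_subtype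
  choose U hUne hUsub hUv using fun (C : ↥T) => hU C.1 C.2.1 C.2.2
  have hcover : ⋃ C : ↥T, (U C : Set (Fin d → ℝ)) ≠ Set.univ := by
    intro h
    obtain ⟨C, hCtop⟩ := Subspace.exists_eq_top_of_iUnion_eq_univ h
    exact hUne C hCtop
  obtain ⟨p, hp⟩ := Set.ne_univ_iff_exists_notMem _ |>.mp hcover
  rw [Set.mem_iUnion] at hp
  push_neg at hp
  have hp' : ∀ C ∈ S, coneDim d C < d → ∀ t : ℝ, p + t • v ∉ C := by
    intro C hC hdim t hmem
    set Ct : ↥T := ⟨C, hC, hdim⟩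
    apply hp Ct
    have h1 : p + t • v ∈ U Ct := hUsub Ct hmem
    have h2 : p = (p + t • v) - t • v := by abel
    rw [h2]
    exact Submodule.sub_mem _ h1 (Submodule.smul_mem _ t (hUv Ct))
  -- Step 4: find cone containing p and conclude
  have hpS : p ∈ ⋃₀ S := hcomplete ▸ Set.mem_univ p
  obtain ⟨σ0, hσ0, hpσ0⟩ := hpS
  have hvmem : v ∈ σ0 := ray_mem_of_line_avoids d S hS hcomplete p v hp' σ0 hσ0 hpσ0
  have hnvmem : -v ∈ σ0 := by
    refine ray_mem_of_line_avoids d S hS hcomplete p (-v) ?_ σ0 hσ0 hpσ0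
    intro C hC hdim t
    have := hp' C hC hdim (-t)
    rwa [show p + t • (-v) = p + (-t) • v by rw [smul_neg, neg_smul], ] 
  exact hv0 (hS.2.2.1 σ0 hσ0 v hvmem hnvmem)
end
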